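/- arXiv:2306.13225 — 7 statements merged into one kernel-verified Lean document; each statement's English description precedes it below -/
import Mathlib

section
/- Petridis's form of Plünnecke's inequality: let A, B be nonempty finite subsets of ℤ, and suppose K = |A+B|/|A| equals the minimum of |A'+B|/|A'| over all nonempty subsets A' of A. Then for every ℓ ∈ ℕ, |A + ℓ·B| ≤ K^ℓ · |A|, where ℓ·B denotes the ℓ-fold iterated sumset B + B + ⋯ + B (ℓ times). -/
open Pointwise

/-
Petridis: if `A` minimises `|A' + B| / |A'|` among its nonempty subsets, then
`|C + A + B| |A| ≤ |A + B| |C + A|` for every `C`. Taking `C = n • B` turns this into the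
recursion `|A + (n + 1) • B| ≤ K |A + n • B|`, and induction on `n` gives `K ^ n |A|`.
-/

namespace Finset

variable {G : Type*} [AddCommGroup G] [DecidableEq G]

theorem card_add_nsmul_le {A B : Finset G}
    (hAB : ∀ A' ⊆ A, #(A + B) * #A' ≤ #(A' + B) * #A) (n : ℕ) :
    (#(A + n • B) : ℝ) ≤ ((#(A + B) : ℝ) / #A) ^ n * #A := by
  rcases A.eq_empty_or_nonempty with rfl | hA
  · simp
  have hA_pos : (0 : ℝ) < #A := by exact_mod_cast hA.card_pos
  induction n with
  | zero => simp
  | succ n ih =>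
    refine le_of_mul_le_mul_right ?_ hA_pos
    calc (#(A + (n + 1) • B) : ℝ) * #A
        = #(n • B + A + B) * #A := by rw [succ_nsmul, ← add_assoc, add_comm A]
      _ ≤ #(A + B) * #(n • B + A) := mod_cast pluennecke_petridis_inequality_add _ hAB
      _ ≤ #(A + B) * ((#(A + B) / #A) ^ n * #A) := by rw [add_comm (n • B)]; gcongr
      _ = (#(A + B) / #A) ^ (n + 1) * #A * #A := by simp [field, pow_succ]

end Finset

theorem petridis_plunnecke_general (A B : Finset ℤ) (K : ℝ)
    (hK : K = ((A + B).card : ℝ) / A.card)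
    (hmin : ∀ A' ⊆ A, A'.Nonempty → K ≤ ((A' + B).card : ℝ) / A'.card) :
    ∀ ℓ : ℕ, ((A + ℓ • B).card : ℝ) ≤ K ^ ℓ * A.card := by
  have hAB : ∀ A' ⊆ A, (A + B).card * A'.card ≤ (A' + B).card * A.card := by
    intro A' hA'A
    rcases A'.eq_empty_or_nonempty with rfl | hA'
    · simp
    have hA_pos := (hA'.mono hA'A).card_pos
    have h := hK ▸ hmin A' hA'A hA'
    rw [div_le_div_iff₀ (by positivity) (by positivity)] at h
    exact_mod_cast h
  intro ℓ
  simpa only [hK] using Finset.card_add_nsmul_le hAB ℓ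

theorem petridis_plunnecke (A B : Finset ℤ) (hA : A.Nonempty) (hB : B.Nonempty) (K : ℝ)
    (hK : K = ((A + B).card : ℝ) / A.card)
    (hmin : ∀ A' ⊆ A, A'.Nonempty → K ≤ ((A' + B).card : ℝ) / A'.card) :
    ∀ ℓ : ℕ, ((A + ℓ • B).card : ℝ) ≤ K ^ ℓ * A.card :=
  petridis_plunnecke_general A B K hK hmin
end

section
/- If B ⊆ ℤ^k is not covered by n parallel hyperplanes, then for any positive integer ℓ the ℓ-fold iterated sumset ℓ·B is not covered by ℓ·n parallel hyperplanes. -/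
/-!
Fix the direction `φ` of the hyperplanes. Covering by `n` level sets of `φ` means that `φ` takes at
most `n` values on the set, and `φ` maps `ℓ • B` onto `ℓ • φ(B)`. If `φ(B)` has `n + 1` values,
then by Cauchy–Davenport in `ℝ` the `ℓ`-fold sumset of these values has at least
`ℓ * n + 1` elements, so `φ` takes more than `ℓ * n` values on `ℓ • B`.
-/

open Pointwise

/-- `B ⊆ ℤ^k` is covered by `n` parallel hyperplanes: there is a nonzero linear
functional `φ : ℝ^k → ℝ` and `n` constants such that every point of `B` (viewed in `ℝ^k`)
lies on one of the corresponding level sets. -/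
def CoveredByParallelHyperplanes (k n : ℕ) (B : Set (Fin k → ℤ)) : Prop :=
  ∃ φ : (Fin k → ℝ) →ₗ[ℝ] ℝ, φ ≠ 0 ∧ ∃ c : Fin n → ℝ,
    ∀ x ∈ B, ∃ i : Fin n, φ (fun j => (x j : ℝ)) = c i

open Set

lemma Set.exists_fin_range_superset_iff_encard_le {α : Type*} [Nonempty α] {s : Set α} {n : ℕ} :
    (∃ c : Fin n → α, s ⊆ range c) ↔ s.encard ≤ n := by
  constructor
  · rintro ⟨c, hc⟩
    calc s.encard ≤ (range c).encard := encard_le_encard hc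
      _ = (c '' univ).encard := by rw [image_univ]
      _ ≤ (univ : Set (Fin n)).encard := encard_image_le c univ
      _ = n := by simp
  · intro hs
    obtain ⟨m, f, hf, rfl⟩ := (encard_ne_top_iff.mp (ne_top_of_le_ne_top (by simp) hs)).fin_param
    have hmn : m ≤ n := by
      rwa [← image_univ, hf.injOn.encard_image, encard_univ, ENat.card_eq_coe_fintype_card,
        Fintype.card_fin, Nat.cast_le] at hs
    refine ⟨Function.extend (Fin.castLE hmn) f fun _ => Classical.arbitrary α, ?_⟩
    rintro _ ⟨j, rfl⟩
    exact ⟨Fin.castLE hmn j, (Fin.castLE_injective hmn).extend_apply _ _ j⟩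

section CancelOrdered

variable {α : Type*} [AddMonoid α] [LinearOrder α] [IsCancelAdd α]
  [AddLeftMono α] [AddRightMono α]

open scoped Finset

lemma Finset.mul_card_sub_one_add_one_le_card_nsmul {s : Finset α} (hs : s.Nonempty) (ℓ : ℕ) :
    ℓ * (#s - 1) + 1 ≤ #(ℓ • s) := by
  induction ℓ with
  | zero => simp
  | succ m ih =>
    have hcd : #(m • s) + #s - 1 ≤ #(m • s + s) :=
      cauchy_davenport_add_of_linearOrder_isCancelAdd hs.nsmul hs
    have hs_pos : 0 < #s := hs.card_pos
    rw [show (m + 1) • s = m • s + s from succ_nsmul s m]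
    grind

lemma Set.mul_lt_encard_nsmul {s : Set α} {n : ℕ} (hs : n < s.encard) (ℓ : ℕ) :
    ℓ * n < (ℓ • s).encard := by
  obtain ⟨t, hts, ht⟩ := exists_subset_encard_eq (Order.add_one_le_of_lt hs)
  obtain ⟨u, rfl⟩ := (finite_of_encard_eq_coe ht).exists_finset_coe
  have hu : #u = n + 1 := by exact_mod_cast (encard_coe_eq_coe_finsetCard u).symm.trans ht
  have hu_ne : u.Nonempty := Finset.card_pos.mp (by omega)
  calc (ℓ * n : ℕ∞) < (ℓ * n + 1 : ℕ) := by norm_cast; omega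
    _ ≤ #(ℓ • u) := by
      have := Finset.mul_card_sub_one_add_one_le_card_nsmul hu_ne ℓ
      rw [hu, Nat.add_sub_cancel] at this
      exact_mod_cast this
    _ = (ℓ • (u : Set α)).encard := by rw [← Finset.coe_nsmul, encard_coe_eq_coe_finsetCard]
    _ ≤ (ℓ • s).encard := encard_le_encard (nsmul_subset_nsmul_left hts)

end CancelOrdered

def LinearMap.restrictToLattice {k : ℕ} (φ : (Fin k → ℝ) →ₗ[ℝ] ℝ) : (Fin k → ℤ) →+ ℝ :=
  φ.toAddMonoidHom.comp ((Int.castAddHom ℝ).compLeft (Fin k))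

lemma coveredByParallelHyperplanes_iff {k n : ℕ} {B : Set (Fin k → ℤ)} :
    CoveredByParallelHyperplanes k n B ↔
      ∃ φ : (Fin k → ℝ) →ₗ[ℝ] ℝ, φ ≠ 0 ∧ (φ.restrictToLattice '' B).encard ≤ n := by
  simp only [CoveredByParallelHyperplanes, ← exists_fin_range_superset_iff_encard_le,
    subset_def, forall_mem_image, mem_range]
  exact exists_congr fun _ ↦ and_congr_right fun _ ↦ exists_congr fun _ ↦
    forall₂_congr fun _ _ ↦ exists_congr fun _ ↦ eq_comm

theorem iterated_sumset_not_covered_general (k n ℓ : ℕ)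
    (B : Set (Fin k → ℤ)) (hB : ¬ CoveredByParallelHyperplanes k n B) :
    ¬ CoveredByParallelHyperplanes k (ℓ * n) (ℓ • B) := by
  simp only [coveredByParallelHyperplanes_iff, not_exists, not_and, not_le] at hB ⊢
  intro φ hφ
  rw [image_nsmul, Nat.cast_mul]
  exact mul_lt_encard_nsmul (hB φ hφ) ℓ

theorem iterated_sumset_not_covered (k n ℓ : ℕ) (hn : 0 < n) (hℓ : 0 < ℓ)
    (B : Set (Fin k → ℤ)) (hB : ¬ CoveredByParallelHyperplanes k n B) :
    ¬ CoveredByParallelHyperplanes k (ℓ * n) (ℓ • B) :=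
  iterated_sumset_not_covered_general k n ℓ B hB
end

section
/- For nonempty finite sets A, B ⊆ ℤ^d, |A + B + {0,1}^d|^{1/d} ≥ |A|^{1/d} + |B|^{1/d}, where {0,1}^d denotes the set of vertices of the unit cube. -/
/-!
Thicken every point `a` of `A` and `B` to the unit cube `(a, a + 1]`. The cubes are disjoint,
so the two unions `X`, `Y` have volumes `|A|` and `|B|`, and `X + Y` is covered by the cubes of
`A + B + {0,1}^d`. It remains to prove `(|X|^{1/d} + |Y|^{1/d})^d ≤ |X + Y|` for finite unions
of disjoint boxes, by the Hadwiger–Ohmann induction on the total number of boxes. For two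
boxes this is AM–GM on the side lengths. Otherwise a coordinate hyperplane separates two boxes
of `X` and cuts `X` into two unions of fewer boxes, in volume ratio `θ : 1 - θ`; by the
intermediate value theorem a parallel hyperplane cuts `Y` in the same ratio. The sums of the
lower and of the upper halves lie on opposite sides of the sum hyperplane, and since the bound
is homogeneous of degree one, the inequalities for the two halves add up to the one for `X, Y`.
-/

open MeasureTheory Set Function BoxIntegral Filter Topology Pointwise
open scoped ENNReal

namespace BrunnMinkowski

variable {ι : Type*}

theorem Ioc_subset_Ioc_add_Ioc {a b c d : ℝ} (hab : a < b) (hcd : c < d) :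
    Ioc (a + c) (b + d) ⊆ Ioc a b + Ioc c d := by
  rintro z ⟨hz₁, hz₂⟩
  set r := (z - (a + c)) / ((b - a) + (d - c))
  have hr₀ : 0 < r := div_pos (by linarith) (by linarith)
  have hr₁ : r ≤ 1 := (div_le_one (by linarith)).2 (by linarith)
  refine ⟨a + r * (b - a), ⟨by nlinarith, by nlinarith⟩, c + r * (d - c),
    ⟨by nlinarith, by nlinarith⟩, ?_⟩
  have : r * ((b - a) + (d - c)) = z - (a + c) := div_mul_cancel₀ _ (by linarith)
  linarith

noncomputable def brunnMinkowskiBound (n : ℕ) (a b : ℝ≥0∞) : ℝ≥0∞ :=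
  (a ^ (n⁻¹ : ℝ) + b ^ (n⁻¹ : ℝ)) ^ n

theorem brunnMinkowskiBound_comm (n : ℕ) (a b : ℝ≥0∞) :
    brunnMinkowskiBound n a b = brunnMinkowskiBound n b a := by
  rw [brunnMinkowskiBound, brunnMinkowskiBound, add_comm]

theorem brunnMinkowskiBound_mul {n : ℕ} (hn : n ≠ 0) (θ a b : ℝ≥0∞) :
    brunnMinkowskiBound n (θ * a) (θ * b) = θ * brunnMinkowskiBound n a b := by
  have hw : (0 : ℝ) ≤ (n : ℝ)⁻¹ := by positivity
  rw [brunnMinkowskiBound, brunnMinkowskiBound, ENNReal.mul_rpow_of_nonneg _ _ hw,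
    ENNReal.mul_rpow_of_nonneg _ _ hw, ← mul_add, mul_pow, ENNReal.rpow_inv_natCast_pow hn]

theorem brunnMinkowskiBound_ofReal (n : ℕ) {a b : ℝ} (ha : 0 ≤ a) (hb : 0 ≤ b) :
    brunnMinkowskiBound n (ENNReal.ofReal a) (ENNReal.ofReal b) =
      ENNReal.ofReal ((a ^ (n⁻¹ : ℝ) + b ^ (n⁻¹ : ℝ)) ^ n) := by
  have hw : (0 : ℝ) ≤ (n : ℝ)⁻¹ := by positivity
  rw [brunnMinkowskiBound, ENNReal.ofReal_rpow_of_nonneg ha hw, ENNReal.ofReal_rpow_of_nonneg hb hw,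
    ← ENNReal.ofReal_add (Real.rpow_nonneg ha _) (Real.rpow_nonneg hb _),
    ← ENNReal.ofReal_pow (add_nonneg (Real.rpow_nonneg ha _) (Real.rpow_nonneg hb _))]

theorem brunnMinkowskiBound_le_iff {n : ℕ} (hn : n ≠ 0) {a b c : ℝ≥0∞} :
    brunnMinkowskiBound n a b ≤ c ↔ a ^ (n⁻¹ : ℝ) + b ^ (n⁻¹ : ℝ) ≤ c ^ (n⁻¹ : ℝ) := by
  rw [brunnMinkowskiBound, ← ENNReal.rpow_natCast,
    ENNReal.le_rpow_inv_iff (Nat.cast_pos.2 (Nat.pos_of_ne_zero hn))]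

section HalfSpaces

variable {μ : Measure (ι → ℝ)}

theorem measure_inter_le_add_measure_inter_gt (X : Set (ι → ℝ)) (i : ι) (t : ℝ) :
    μ (X ∩ {x | x i ≤ t}) + μ (X ∩ {x | t < x i}) = μ X := by
  simpa [sdiff_eq, compl_ofPred] using
    measure_inter_add_sdiff (μ := μ) X (measurableSet_le (measurable_pi_apply i) measurable_const)

theorem measure_inter_gt_eq_one_sub_mul {X : Set (ι → ℝ)} (hX : μ X ≠ ∞) {i : ι} {t : ℝ} {θ : ℝ≥0∞}
    (h : μ (X ∩ {x | x i ≤ t}) = θ * μ X) : μ (X ∩ {x | t < x i}) = (1 - θ) * μ X := by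
  have hsplit := measure_inter_le_add_measure_inter_gt (μ := μ) X i t
  rw [ENNReal.sub_mul fun _ _ => hX, one_mul, ← h]
  refine ENNReal.eq_sub_of_add_eq (ne_top_of_le_ne_top hX (measure_mono inter_subset_left)) ?_
  rwa [add_comm]

theorem measure_add_halves_le_measure_add (X Y : Set (ι → ℝ)) (i : ι) (t s : ℝ) :
    μ (X ∩ {x | x i ≤ t} + Y ∩ {x | x i ≤ s}) + μ (X ∩ {x | t < x i} + Y ∩ {x | s < x i}) ≤
      μ (X + Y) := by
  rw [← measure_inter_le_add_measure_inter_gt (X + Y) i (t + s)]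
  gcongr
  · rintro _ ⟨x, ⟨hx, hxt⟩, y, ⟨hy, hys⟩, rfl⟩
    exact ⟨add_mem_add hx hy, show x i + y i ≤ t + s from add_le_add hxt hys⟩
  · rintro _ ⟨x, ⟨hx, hxt⟩, y, ⟨hy, hys⟩, rfl⟩
    exact ⟨add_mem_add hx hy, show t + s < x i + y i from add_lt_add hxt hys⟩

theorem brunnMinkowskiBound_le_of_halves {n : ℕ} (hn : n ≠ 0) {X Y : Set (ι → ℝ)}
    (hX : μ X ≠ ∞) (hY : μ Y ≠ ∞) {i : ι} {t s : ℝ} {θ : ℝ≥0∞} (hθ : θ ≤ 1)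
    (hXθ : μ (X ∩ {x | x i ≤ t}) = θ * μ X) (hYθ : μ (Y ∩ {x | x i ≤ s}) = θ * μ Y)
    (h_le : brunnMinkowskiBound n (μ (X ∩ {x | x i ≤ t})) (μ (Y ∩ {x | x i ≤ s})) ≤
      μ (X ∩ {x | x i ≤ t} + Y ∩ {x | x i ≤ s}))
    (h_gt : brunnMinkowskiBound n (μ (X ∩ {x | t < x i})) (μ (Y ∩ {x | s < x i})) ≤
      μ (X ∩ {x | t < x i} + Y ∩ {x | s < x i})) :
    brunnMinkowskiBound n (μ X) (μ Y) ≤ μ (X + Y) :=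
  calc brunnMinkowskiBound n (μ X) (μ Y)
      = θ * brunnMinkowskiBound n (μ X) (μ Y) + (1 - θ) * brunnMinkowskiBound n (μ X) (μ Y) := by
        rw [← add_mul, add_tsub_cancel_of_le hθ, one_mul]
    _ = brunnMinkowskiBound n (μ (X ∩ {x | x i ≤ t})) (μ (Y ∩ {x | x i ≤ s})) +
        brunnMinkowskiBound n (μ (X ∩ {x | t < x i})) (μ (Y ∩ {x | s < x i})) := by
        rw [hXθ, hYθ, measure_inter_gt_eq_one_sub_mul hX hXθ,
          measure_inter_gt_eq_one_sub_mul hY hYθ,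
          brunnMinkowskiBound_mul hn, brunnMinkowskiBound_mul hn]
    _ ≤ μ (X + Y) := (add_le_add h_le h_gt).trans (measure_add_halves_le_measure_add X Y i t s)

end HalfSpaces

theorem exists_upper_le_lower_of_disjoint {I J : Box ι} (h : Disjoint (I : Set (ι → ℝ)) J) :
    ∃ i, I.upper i ≤ J.lower i ∨ J.upper i ≤ I.lower i := by
  by_contra! h'
  have hI : (fun i => min (I.upper i) (J.upper i)) ∈ (I : Set (ι → ℝ)) :=
    fun i => ⟨lt_min (I.lower_lt_upper i) (h' i).2, min_le_left _ _⟩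
  exact disjoint_left.1 h hI fun i => ⟨lt_min (h' i).1 (J.lower_lt_upper i), min_le_right _ _⟩

def boxUnion (l : List (Box ι)) : Set (ι → ℝ) := ⋃ J ∈ l, (J : Set (ι → ℝ))

theorem coe_subset_boxUnion {l : List (Box ι)} {J : Box ι} (h : J ∈ l) :
    (J : Set (ι → ℝ)) ⊆ boxUnion l :=
  subset_biUnion_of_mem (u := fun J : Box ι => (J : Set (ι → ℝ))) h

section Cuts

variable {f : Box ι → WithBot (Box ι)} {H : Set (ι → ℝ)}

theorem coe_eq_inter_of_eq_some (hf : ∀ J, (f J : Set (ι → ℝ)) = (J : Set (ι → ℝ)) ∩ H)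
    {J K : Box ι} (h : f J = some K) : (K : Set (ι → ℝ)) = (J : Set (ι → ℝ)) ∩ H := by
  rw [← hf J, h]
  rfl

theorem boxUnion_filterMap (hf : ∀ J, (f J : Set (ι → ℝ)) = (J : Set (ι → ℝ)) ∩ H)
    (l : List (Box ι)) : boxUnion (l.filterMap f) = boxUnion l ∩ H := by
  ext x
  simp only [boxUnion, mem_iUnion₂, mem_inter_iff]
  constructor
  · rintro ⟨K, hK, hx⟩
    obtain ⟨J, hJ, hJK⟩ := List.mem_filterMap.1 hK
    rw [coe_eq_inter_of_eq_some hf hJK] at hx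
    exact ⟨⟨J, hJ, hx.1⟩, hx.2⟩
  · rintro ⟨⟨J, hJ, hxJ⟩, hxH⟩
    have hx : x ∈ (f J : Set (ι → ℝ)) := by rw [hf]; exact ⟨hxJ, hxH⟩
    rw [← Box.biUnion_coe_eq_coe] at hx
    obtain ⟨K, hK, hxK⟩ := mem_iUnion₂.1 hx
    exact ⟨K, List.mem_filterMap.2 ⟨J, hJ, hK.symm⟩, hxK⟩

theorem pairwise_disjoint_filterMap (hf : ∀ J, (f J : Set (ι → ℝ)) = (J : Set (ι → ℝ)) ∩ H)
    {l : List (Box ι)} (hl : l.Pairwise (Disjoint on ((↑) : Box ι → Set (ι → ℝ)))) :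
    (l.filterMap f).Pairwise (Disjoint on ((↑) : Box ι → Set (ι → ℝ))) :=
  hl.filterMap f fun _ _ hJJ' _ hK _ hK' => hJJ'.mono
    ((coe_eq_inter_of_eq_some hf hK).trans_subset inter_subset_left)
    ((coe_eq_inter_of_eq_some hf hK').trans_subset inter_subset_left)

end Cuts

def unitCube (a : ι → ℤ) : Box ι where
  lower i := a i
  upper i := a i + 1
  lower_lt_upper _ := lt_add_one _

theorem mem_unitCube {a : ι → ℤ} {x : ι → ℝ} : x ∈ unitCube a ↔ ∀ i, ⌈x i⌉ = a i + 1 := by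
  simp only [Box.mem_def, unitCube, mem_Ioc, Int.ceil_eq_iff, Int.cast_add, Int.cast_one,
    add_sub_cancel_right]

theorem pairwise_disjoint_unitCube :
    Pairwise (Disjoint on fun a : ι → ℤ => (unitCube a : Set (ι → ℝ))) := fun a b hab =>
  disjoint_left.2 fun x ha hb => hab (funext fun i => by
    have := (mem_unitCube.1 ha i).symm.trans (mem_unitCube.1 hb i)
    omega)

variable [Fintype ι]

theorem prod_rpow_add_prod_rpow_le [Nonempty ι] {a b : ι → ℝ} (ha : ∀ i, 0 < a i)
    (hb : ∀ i, 0 < b i) :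
    (∏ i, a i) ^ (Fintype.card ι : ℝ)⁻¹ + (∏ i, b i) ^ (Fintype.card ι : ℝ)⁻¹ ≤
      (∏ i, (a i + b i)) ^ (Fintype.card ι : ℝ)⁻¹ := by
  set w : ℝ := (Fintype.card ι : ℝ)⁻¹
  have hs : ∀ i, 0 < a i + b i := fun i => add_pos (ha i) (hb i)
  have hw : ∑ _i : ι, w = 1 := by simp [w, Finset.card_univ]
  have hP : 0 ≤ (∏ i, (a i + b i)) ^ w :=
    Real.rpow_nonneg (Finset.prod_nonneg fun i _ => (hs i).le) _
  -- AM-GM applied to the ratios `c i / (a i + b i)`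
  have amgm : ∀ c : ι → ℝ, (∀ i, 0 ≤ c i) →
      (∏ i, c i) ^ w ≤ (∏ i, (a i + b i)) ^ w * ∑ i, w * (c i / (a i + b i)) := by
    intro c hc
    have hcs : ∀ i, 0 ≤ c i / (a i + b i) := fun i => div_nonneg (hc i) (hs i).le
    calc (∏ i, c i) ^ w = (∏ i, (a i + b i)) ^ w * ∏ i, (c i / (a i + b i)) ^ w := by
          rw [Real.finsetProd_rpow _ _ fun i _ => hcs i, ← Real.mul_rpow
            (Finset.prod_nonneg fun i _ => (hs i).le) (Finset.prod_nonneg fun i _ => hcs i),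
            ← Finset.prod_mul_distrib]
          exact congrArg (· ^ w) (Finset.prod_congr rfl fun i _ => by field_simp [(hs i).ne'])
      _ ≤ _ := mul_le_mul_of_nonneg_left (Real.geom_mean_le_arith_mean_weighted _ _ _
          (fun _ _ => by positivity) hw fun i _ => hcs i) hP
  calc _ ≤ (∏ i, (a i + b i)) ^ w * ∑ i, w * (a i / (a i + b i)) +
        (∏ i, (a i + b i)) ^ w * ∑ i, w * (b i / (a i + b i)) :=
        add_le_add (amgm a fun i => (ha i).le) (amgm b fun i => (hb i).le)
    _ = (∏ i, (a i + b i)) ^ w := by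
        rw [← mul_add, ← Finset.sum_add_distrib]
        simp_rw [← mul_add, ← add_div, div_self (hs _).ne', mul_one, hw, mul_one]

theorem continuous_volume_inter_le {S : Set (ι → ℝ)} (hS : volume S ≠ ∞) (i : ι) :
    Continuous fun t : ℝ => volume (S ∩ {x | x i ≤ t}) := by
  have : IsFiniteMeasure (volume.restrict S) := isFiniteMeasure_restrict.2 hS
  have hH : ∀ t : ℝ, MeasurableSet {x : ι → ℝ | x i ≤ t} := fun t =>
    measurableSet_le (measurable_pi_apply i) measurable_const
  have hF : (fun t : ℝ => volume (S ∩ {x | x i ≤ t})) = fun t =>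
      ENNReal.ofReal (∫ x, {x : ι → ℝ | x i ≤ t}.indicator 1 x ∂volume.restrict S) := by
    ext t
    rw [integral_indicator_one (hH t), measureReal_restrict_apply (hH t), inter_comm,
      ofReal_measureReal (ne_top_of_le_ne_top hS (measure_mono inter_subset_right))]
  rw [hF]
  refine ENNReal.continuous_ofReal.comp (continuous_iff_continuousAt.2 fun t₀ =>
    continuousAt_of_dominated (bound := 1) (Eventually.of_forall fun t =>
      (stronglyMeasurable_one.indicator (hH t)).aestronglyMeasurable)
    (Eventually.of_forall fun t => Eventually.of_forall fun x =>
      (norm_indicator_le_norm_self _ _).trans (by simp)) (integrable_const 1) ?_)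
  -- off the null hyperplane `x i = t₀`, the integrand is locally constant in `t`
  filter_upwards [ae_restrict_of_ae (Measure.ae_eval_ne (fun _ : ι => volume) i t₀)] with x hx
  rcases hx.lt_or_gt with h | h
  · refine (continuousAt_const (y := (1 : ℝ))).congr ?_
    filter_upwards [eventually_gt_nhds h] with t ht
    simp [indicator, ht.le]
  · refine (continuousAt_const (y := (0 : ℝ))).congr ?_
    filter_upwards [eventually_lt_nhds h] with t ht
    simp [indicator, ht]

theorem exists_volume_inter_le_eq {S : Set (ι → ℝ)} (hSm : MeasurableSet S) (hS : volume S ≠ ∞)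
    (i : ι) {v : ℝ≥0∞} (hv₀ : 0 < v) (hv : v < volume S) :
    ∃ t : ℝ, volume (S ∩ {x | x i ≤ t}) = v := by
  have hmono : Monotone fun t : ℝ => S ∩ {x | x i ≤ t} := fun t t' h =>
    inter_subset_inter_right _ fun x hx => le_trans hx h
  have h_bot : Tendsto (fun t : ℝ => volume (S ∩ {x | x i ≤ t})) atBot (𝓝 0) := by
    have := tendsto_measure_iInter_atBot (μ := volume) (fun t => (hSm.inter
      (measurableSet_le (measurable_pi_apply i) measurable_const)).nullMeasurableSet) hmono
      ⟨0, ne_top_of_le_ne_top hS (measure_mono inter_subset_left)⟩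
    rwa [show ⋂ t : ℝ, S ∩ {x | x i ≤ t} = ∅ from eq_empty_of_forall_notMem fun x hx =>
      by linarith [(mem_iInter.1 hx (x i - 1)).2.out], measure_empty] at this
  have h_top : Tendsto (fun t : ℝ => volume (S ∩ {x | x i ≤ t})) atTop (𝓝 (volume S)) := by
    have := tendsto_measure_iUnion_atTop (μ := volume) hmono
    rwa [show ⋃ t : ℝ, S ∩ {x | x i ≤ t} = S from subset_antisymm (iUnion_subset fun t =>
      inter_subset_left) fun x hx => mem_iUnion.2 ⟨x i, hx, show x i ≤ x i from le_rfl⟩] at this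
  obtain ⟨t₁, ht₁⟩ := (h_bot.eventually (gt_mem_nhds hv₀)).exists
  obtain ⟨t₂, ht₂⟩ := (h_top.eventually (lt_mem_nhds hv)).exists
  exact intermediate_value_univ t₁ t₂ (continuous_volume_inter_le hS i) ⟨ht₁.le, ht₂.le⟩

theorem exists_cut_same_ratio {X Y : Set (ι → ℝ)} (hYm : MeasurableSet Y) (hX : volume X ≠ ∞)
    (hY : volume Y ≠ ∞) (hY₀ : 0 < volume Y) {i : ι} {t : ℝ}
    (hX₁ : 0 < volume (X ∩ {x | x i ≤ t})) (hX₂ : 0 < volume (X ∩ {x | t < x i})) :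
    ∃ θ < 1, ∃ s : ℝ, volume (X ∩ {x | x i ≤ t}) = θ * volume X ∧
      volume (Y ∩ {x | x i ≤ s}) = θ * volume Y ∧
      0 < volume (Y ∩ {x | x i ≤ s}) ∧ 0 < volume (Y ∩ {x | s < x i}) := by
  set θ := volume (X ∩ {x | x i ≤ t}) / volume X
  have hXθ : volume (X ∩ {x | x i ≤ t}) = θ * volume X :=
    (ENNReal.div_mul_cancel (hX₁.trans_le (measure_mono inter_subset_left)).ne' hX).symm
  have hθ : θ < 1 := by
    rw [measure_inter_gt_eq_one_sub_mul hX hXθ] at hX₂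
    exact tsub_pos_iff_lt.1 (ENNReal.mul_pos_iff.1 hX₂).1
  have hθY₀ : 0 < θ * volume Y := ENNReal.mul_pos (ENNReal.div_pos hX₁.ne' hX).ne' hY₀.ne'
  have hθY : θ * volume Y < volume Y := by
    simpa using ENNReal.mul_lt_mul_left hY₀.ne' hY hθ
  obtain ⟨s, hYθ⟩ := exists_volume_inter_le_eq hYm hY i hθY₀ hθY
  refine ⟨θ, hθ, s, hXθ, hYθ, hYθ ▸ hθY₀, ?_⟩
  rw [measure_inter_gt_eq_one_sub_mul hY hYθ]
  exact ENNReal.mul_pos (tsub_pos_of_lt hθ).ne' hY₀.ne'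

theorem volume_coe_box (J : Box ι) :
    volume (J : Set (ι → ℝ)) = ENNReal.ofReal (∏ i, (J.upper i - J.lower i)) := by
  rw [J.coe_eq_pi, Real.volume_pi_Ioc,
    ENNReal.ofReal_prod_of_nonneg fun i _ => sub_nonneg.2 (J.lower_le_upper i)]

theorem volume_coe_box_pos (J : Box ι) : 0 < volume (J : Set (ι → ℝ)) := by
  rw [volume_coe_box]
  exact ENNReal.ofReal_pos.2 (Finset.prod_pos fun i _ => sub_pos.2 (J.lower_lt_upper i))

theorem brunnMinkowski_box [Nonempty ι] (I J : Box ι) :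
    brunnMinkowskiBound (Fintype.card ι) (volume (I : Set (ι → ℝ))) (volume (J : Set (ι → ℝ))) ≤
      volume ((I : Set (ι → ℝ)) + (J : Set (ι → ℝ))) := by
  have hsub : univ.pi (fun i => Ioc (I.lower i + J.lower i) (I.upper i + J.upper i)) ⊆
      (I : Set (ι → ℝ)) + (J : Set (ι → ℝ)) := fun z hz => by
    choose x hx y hy hxy using fun i =>
      Ioc_subset_Ioc_add_Ioc (I.lower_lt_upper i) (J.lower_lt_upper i) (hz i trivial)
    exact ⟨x, hx, y, hy, funext hxy⟩
  refine le_trans ?_ (measure_mono hsub)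
  have ha : ∀ i, 0 < I.upper i - I.lower i := fun i => sub_pos.2 (I.lower_lt_upper i)
  have hb : ∀ i, 0 < J.upper i - J.lower i := fun i => sub_pos.2 (J.lower_lt_upper i)
  have hab : 0 ≤ ∏ i, ((I.upper i - I.lower i) + (J.upper i - J.lower i)) :=
    Finset.prod_nonneg fun i _ => (add_pos (ha i) (hb i)).le
  rw [volume_coe_box, volume_coe_box, brunnMinkowskiBound_ofReal _
    (Finset.prod_nonneg fun i _ => (ha i).le) (Finset.prod_nonneg fun i _ => (hb i).le),
    Real.volume_pi_Ioc, ← ENNReal.ofReal_prod_of_nonneg fun i _ => by linarith [ha i, hb i]]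
  refine ENNReal.ofReal_le_ofReal ?_
  calc _ ≤ ((∏ i, ((I.upper i - I.lower i) + (J.upper i - J.lower i))) ^
          (Fintype.card ι : ℝ)⁻¹) ^ Fintype.card ι :=
        pow_le_pow_left₀ (add_nonneg (Real.rpow_nonneg
          (Finset.prod_nonneg fun i _ => (ha i).le) _) (Real.rpow_nonneg
          (Finset.prod_nonneg fun i _ => (hb i).le) _)) (prod_rpow_add_prod_rpow_le ha hb) _
    _ = _ := by
        rw [Real.rpow_inv_natCast_pow hab Fintype.card_ne_zero]
        exact Finset.prod_congr rfl fun i _ => by ring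

theorem measurableSet_boxUnion (l : List (Box ι)) : MeasurableSet (boxUnion l) :=
  MeasurableSet.biUnion l.finite_toSet.countable fun J _ => J.measurableSet_coe

theorem volume_boxUnion_ne_top (l : List (Box ι)) : volume (boxUnion l) ≠ ∞ :=
  (measure_biUnion_lt_top l.finite_toSet fun J _ => J.measure_coe_lt_top volume).ne

theorem volume_boxUnion_pos {l : List (Box ι)} (hl : l ≠ []) : 0 < volume (boxUnion l) := by
  obtain ⟨J, hJ⟩ := List.exists_mem_of_ne_nil l hl
  exact (volume_coe_box_pos J).trans_le (measure_mono (coe_subset_boxUnion hJ))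

theorem ne_nil_of_volume_boxUnion_pos {l : List (Box ι)} (h : 0 < volume (boxUnion l)) :
    l ≠ [] := by
  rintro rfl
  simp [boxUnion] at h

theorem brunnMinkowski_boxUnion_of_disjoint [Nonempty ι] {L M : List (Box ι)} {J K : Box ι}
    (hJ : J ∈ L) (hK : K ∈ L) (hJK : Disjoint (J : Set (ι → ℝ)) K) (hM : M ≠ [])
    (hLd : L.Pairwise (Disjoint on ((↑) : Box ι → Set (ι → ℝ))))
    (hMd : M.Pairwise (Disjoint on ((↑) : Box ι → Set (ι → ℝ))))
    (IH : ∀ L' M' : List (Box ι), L'.length + M'.length < L.length + M.length → L' ≠ [] →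
      M' ≠ [] → L'.Pairwise (Disjoint on ((↑) : Box ι → Set (ι → ℝ))) →
      M'.Pairwise (Disjoint on ((↑) : Box ι → Set (ι → ℝ))) →
      brunnMinkowskiBound (Fintype.card ι) (volume (boxUnion L')) (volume (boxUnion M')) ≤
        volume (boxUnion L' + boxUnion M')) :
    brunnMinkowskiBound (Fintype.card ι) (volume (boxUnion L)) (volume (boxUnion M)) ≤
      volume (boxUnion L + boxUnion M) := by
  obtain ⟨i, hi⟩ := exists_upper_le_lower_of_disjoint hJK
  wlog h : J.upper i ≤ K.lower i generalizing J K
  · exact this hK hJ hJK.symm hi.symm (hi.resolve_left h)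
  -- cut `L` between `J` and `K`, and `M` at the level with the same volume ratio
  set t := J.upper i
  have hX := volume_boxUnion_ne_top L
  have hY := volume_boxUnion_ne_top M
  have hX₁ : 0 < volume (boxUnion L ∩ {x | x i ≤ t}) := (volume_coe_box_pos J).trans_le
    (measure_mono (subset_inter (coe_subset_boxUnion hJ) fun x hx => (hx i).2))
  have hX₂ : 0 < volume (boxUnion L ∩ {x | t < x i}) := (volume_coe_box_pos K).trans_le
    (measure_mono (subset_inter (coe_subset_boxUnion hK) fun x hx => h.trans_lt (hx i).1))
  obtain ⟨θ, hθ, s, hXθ, hYθ, hY₁, hY₂⟩ := exists_cut_same_ratio (measurableSet_boxUnion M)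
    hX hY (volume_boxUnion_pos hM) hX₁ hX₂
  have hLle := boxUnion_filterMap (fun _ => Box.coe_splitLower (i := i) (x := t)) L
  have hLgt := boxUnion_filterMap (fun _ => Box.coe_splitUpper (i := i) (x := t)) L
  have hMle := boxUnion_filterMap (fun _ => Box.coe_splitLower (i := i) (x := s)) M
  have hMgt := boxUnion_filterMap (fun _ => Box.coe_splitUpper (i := i) (x := s)) M
  refine brunnMinkowskiBound_le_of_halves Fintype.card_ne_zero hX hY hθ.le hXθ hYθ ?_ ?_
  · rw [← hLle, ← hMle]
    refine IH _ _ (add_lt_add_of_lt_of_le ?_ (List.length_filterMap_le _ _))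
      (ne_nil_of_volume_boxUnion_pos (by rwa [hLle]))
      (ne_nil_of_volume_boxUnion_pos (by rwa [hMle]))
      (pairwise_disjoint_filterMap (fun _ => Box.coe_splitLower (i := i) (x := t)) hLd)
      (pairwise_disjoint_filterMap (fun _ => Box.coe_splitLower (i := i) (x := s)) hMd)
    exact List.length_filterMap_lt_length_iff_exists.2 ⟨K, hK, Box.splitLower_eq_bot.2 h⟩
  · rw [← hLgt, ← hMgt]
    refine IH _ _ (add_lt_add_of_lt_of_le ?_ (List.length_filterMap_le _ _))
      (ne_nil_of_volume_boxUnion_pos (by rwa [hLgt]))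
      (ne_nil_of_volume_boxUnion_pos (by rwa [hMgt]))
      (pairwise_disjoint_filterMap (fun _ => Box.coe_splitUpper (i := i) (x := t)) hLd)
      (pairwise_disjoint_filterMap (fun _ => Box.coe_splitUpper (i := i) (x := s)) hMd)
    exact List.length_filterMap_lt_length_iff_exists.2 ⟨J, hJ, Box.splitUpper_eq_bot.2 le_rfl⟩

theorem brunnMinkowski_boxUnion [Nonempty ι] {L M : List (Box ι)} (hL : L ≠ []) (hM : M ≠ [])
    (hLd : L.Pairwise (Disjoint on ((↑) : Box ι → Set (ι → ℝ))))
    (hMd : M.Pairwise (Disjoint on ((↑) : Box ι → Set (ι → ℝ)))) :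
    brunnMinkowskiBound (Fintype.card ι) (volume (boxUnion L)) (volume (boxUnion M)) ≤
      volume (boxUnion L + boxUnion M) := by
  induction hN : L.length + M.length using Nat.strong_induction_on generalizing L M with
  | _ N IH =>
  rcases L with _ | ⟨J, _ | ⟨K, L'⟩⟩
  · exact absurd rfl hL
  · rcases M with _ | ⟨I, _ | ⟨K, M'⟩⟩
    · exact absurd rfl hM
    · simpa [boxUnion] using brunnMinkowski_box J I
    · rw [brunnMinkowskiBound_comm, add_comm]
      exact brunnMinkowski_boxUnion_of_disjoint List.mem_cons_self (by simp)
        (List.rel_of_pairwise_cons hMd List.mem_cons_self) hL hMd hLd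
        fun _ _ h hL' hM' hL'd hM'd => IH _ (by simp at h hN; omega) hL' hM' hL'd hM'd rfl
  · exact brunnMinkowski_boxUnion_of_disjoint List.mem_cons_self (by simp)
      (List.rel_of_pairwise_cons hLd List.mem_cons_self) hM hLd hMd
      fun _ _ h hL' hM' hL'd hM'd => IH _ (hN ▸ h) hL' hM' hL'd hM'd rfl

theorem volume_biUnion_unitCube (A : Finset (ι → ℤ)) :
    volume (⋃ a ∈ A, (unitCube a : Set (ι → ℝ))) = A.card := by
  rw [measure_biUnion_finset (pairwise_disjoint_unitCube.set_pairwise _)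
    fun a _ => (unitCube a).measurableSet_coe]
  simp [volume_coe_box, unitCube]

theorem biUnion_unitCube_add_subset [DecidableEq ι] (A B : Finset (ι → ℤ)) :
    (⋃ a ∈ A, (unitCube a : Set (ι → ℝ))) + (⋃ b ∈ B, (unitCube b : Set (ι → ℝ))) ⊆
      ⋃ c ∈ A + B + Fintype.piFinset (fun _ => {0, 1}), (unitCube c : Set (ι → ℝ)) := by
  rintro _ ⟨x, hx, y, hy, rfl⟩
  obtain ⟨a, ha, hxa⟩ := mem_iUnion₂.1 hx
  obtain ⟨b, hb, hyb⟩ := mem_iUnion₂.1 hy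
  rw [Box.mem_coe, mem_unitCube] at hxa hyb
  set c : ι → ℤ := fun i => ⌈x i + y i⌉ - 1
  refine mem_iUnion₂.2 ⟨c, Finset.mem_add.2 ⟨a + b, Finset.add_mem_add ha hb, c - (a + b),
    Fintype.mem_piFinset.2 fun i => ?_, add_sub_cancel _ _⟩, mem_unitCube.2 fun i => by simp [c]⟩
  -- `⌈x i + y i⌉` is `⌈x i⌉ + ⌈y i⌉` or one less
  have h₁ := Int.ceil_add_le (x i) (y i)
  have h₂ := Int.ceil_add_ceil_le (x i) (y i)
  rw [hxa i, hyb i] at h₁ h₂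
  simp only [Pi.sub_apply, Pi.add_apply, Finset.mem_insert, Finset.mem_singleton, c]
  omega

theorem brunnMinkowskiBound_card_le_card_add_cube [DecidableEq ι] [Nonempty ι]
    {A B : Finset (ι → ℤ)} (hA : A.Nonempty) (hB : B.Nonempty) :
    brunnMinkowskiBound (Fintype.card ι) A.card B.card ≤
      (A + B + Fintype.piFinset fun _ => {0, 1}).card := by
  have h := brunnMinkowski_boxUnion (L := A.toList.map unitCube) (M := B.toList.map unitCube)
    (by simpa using hA.ne_empty) (by simpa using hB.ne_empty)
    (List.Pairwise.map unitCube (fun _ _ hab => pairwise_disjoint_unitCube hab) A.nodup_toList)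
    (List.Pairwise.map unitCube (fun _ _ hab => pairwise_disjoint_unitCube hab) B.nodup_toList)
  have hU : ∀ C : Finset (ι → ℤ),
      boxUnion (C.toList.map unitCube) = ⋃ c ∈ C, (unitCube c : Set (ι → ℝ)) := fun C => by
    simp [boxUnion]
  rw [hU, hU, volume_biUnion_unitCube, volume_biUnion_unitCube] at h
  exact h.trans ((measure_mono (biUnion_unitCube_add_subset A B)).trans
    (volume_biUnion_unitCube _).le)

end BrunnMinkowski

theorem discrete_bm_with_cube (d : ℕ) (hd : 1 ≤ d) (A B : Finset (Fin d → ℤ))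
    (hA : A.Nonempty) (hB : B.Nonempty) :
    ((A + B + Fintype.piFinset (fun _ : Fin d => ({0, 1} : Finset ℤ))).card : ℝ) ^ ((1 : ℝ) / d)
      ≥ (A.card : ℝ) ^ ((1 : ℝ) / d) + (B.card : ℝ) ^ ((1 : ℝ) / d) := by
  have : Nonempty (Fin d) := ⟨⟨0, hd⟩⟩
  have h := (BrunnMinkowski.brunnMinkowskiBound_le_iff Fintype.card_ne_zero).1
    (BrunnMinkowski.brunnMinkowskiBound_card_le_card_add_cube hA hB)
  rw [Fintype.card_fin] at h
  have hfin : ∀ n : ℕ, (n : ℝ≥0∞) ^ (d⁻¹ : ℝ) ≠ ∞ := fun n =>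
    ENNReal.rpow_ne_top_of_nonneg (by positivity) (ENNReal.natCast_ne_top n)
  have := ENNReal.toReal_mono (hfin _) h
  rwa [ENNReal.toReal_add (hfin _) (hfin _), ← ENNReal.toReal_rpow, ← ENNReal.toReal_rpow,
    ← ENNReal.toReal_rpow, ENNReal.toReal_natCast, ENNReal.toReal_natCast, ENNReal.toReal_natCast,
    ← one_div] at this
end

section
/- Discrete Prékopa-type superadditivity: let d ≥ 1 and let f, g, h : ℤ → ℝ≥0 be finitely supported with Σf > 0 and Σg > 0, such that for all x, y ∈ ℤ with f(x) > 0 and g(y) > 0 we have h(x+y)^{1/d} ≥ f(x)^{1/d} + g(y)^{1/d}. Then (Σ h)^{1/d} ≥ (Σ f)^{1/d} + (Σ g)^{1/d}, where Σ denotes the sum over all integers. -/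
/-
Layer-cake argument. Put `u = f^(1/d)`, `v = g^(1/d)`, `w = h^(1/d)`, let `A = max u`, `B = max v`,
`M = A + B`, and rescale `u' = u / (A/M)`, `v' = v / (B/M)`, so that both have maximum `M` and
`(A/M) u' x + (B/M) v' y ≤ w (x + y)`. For `0 ≤ r < M` the superlevel sets `{u' > r}` and
`{v' > r}` are nonempty and their sumset lies in `{w > r}`, so Cauchy–Davenport in `ℤ` gives
`#{u' > r} + #{v' > r} ≤ #{w > r} + 1`. Integrating against `d r^(d-1) dr` over `[0, M]` yields
`Σ u'^d + Σ v'^d ≤ Σ w^d + M^d`, and convexity of `t ↦ t^d` turns this into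
`((Σ f)^(1/d) + (Σ g)^(1/d))^d ≤ Σ h`.
-/

open MeasureTheory Set Finset
open Pointwise

section LayerCake

variable {d : ℕ}

lemma integral_natCast_mul_pow_sub_one (hd : d ≠ 0) (b : ℝ) :
    ∫ r in (0 : ℝ)..b, (d : ℝ) * r ^ (d - 1) = b ^ d := by
  obtain ⟨n, rfl⟩ := Nat.exists_eq_add_one_of_ne_zero hd
  rw [intervalIntegral.integral_const_mul, Nat.add_sub_cancel, integral_pow,
    zero_pow n.succ_ne_zero, sub_zero]
  push_cast
  field_simp

lemma intervalIntegrable_indicator_Iio_natCast_mul_pow_sub_one (c a b : ℝ) :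
    IntervalIntegrable ((Iio c).indicator fun r => (d : ℝ) * r ^ (d - 1)) volume a b := by
  have hφ := ((continuous_pow (d - 1)).intervalIntegrable (μ := volume) a b).const_mul (d : ℝ)
  rw [intervalIntegrable_iff] at hφ ⊢
  exact hφ.indicator measurableSet_Iio

lemma integral_indicator_Iio_natCast_mul_pow_sub_one (hd : d ≠ 0) {c M : ℝ}
    (hc : 0 ≤ c) (hM : 0 ≤ M) :
    ∫ r in (0 : ℝ)..M, (Iio c).indicator (fun r => (d : ℝ) * r ^ (d - 1)) r = min c M ^ d := by
  rw [intervalIntegral.integral_of_le hM, integral_Ioc_eq_integral_Ioo,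
    setIntegral_indicator measurableSet_Iio, Set.Ioo_inter_Iio, min_comm,
    ← integral_Ioc_eq_integral_Ioo,
    ← intervalIntegral.integral_of_le (le_min hc hM), integral_natCast_mul_pow_sub_one hd]

variable {ι : Type*}

lemma card_lt_mul_eq_sum_indicator (s : Finset ι) (u : ι → ℝ) (φ : ℝ → ℝ) :
    (fun r => #{x ∈ s | r < u x} * φ r) = ∑ x ∈ s, (Iio (u x)).indicator φ := by
  ext r
  simp only [Finset.sum_apply, indicator_apply, Set.mem_Iio, ← Finset.sum_filter, sum_const,
    nsmul_eq_mul]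

lemma intervalIntegrable_card_lt_mul (s : Finset ι) (u : ι → ℝ) (M : ℝ) :
    IntervalIntegrable (fun r => #{x ∈ s | r < u x} * ((d : ℝ) * r ^ (d - 1))) volume 0 M := by
  rw [card_lt_mul_eq_sum_indicator]
  exact .sum s fun x _ => intervalIntegrable_indicator_Iio_natCast_mul_pow_sub_one _ _ _

lemma integral_card_lt_mul_eq_sum_min_pow (hd : d ≠ 0) (s : Finset ι) {u : ι → ℝ}
    (hu : ∀ x ∈ s, 0 ≤ u x) {M : ℝ} (hM : 0 ≤ M) :
    ∫ r in (0 : ℝ)..M, #{x ∈ s | r < u x} * ((d : ℝ) * r ^ (d - 1)) =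
      ∑ x ∈ s, min (u x) M ^ d := by
  rw [card_lt_mul_eq_sum_indicator, Finset.sum_fn, intervalIntegral.integral_finsetSum fun x _ =>
    intervalIntegrable_indicator_Iio_natCast_mul_pow_sub_one _ _ _]
  exact sum_congr rfl fun x hx => integral_indicator_Iio_natCast_mul_pow_sub_one hd (hu x hx) hM

lemma sum_min_pow_add_sum_min_pow_le {ι₁ ι₂ κ : Type*} (hd : d ≠ 0) {s₁ : Finset ι₁}
    {s₂ : Finset ι₂} {t : Finset κ} {u₁ : ι₁ → ℝ} {u₂ : ι₂ → ℝ} {v : κ → ℝ}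
    (hu₁ : ∀ x ∈ s₁, 0 ≤ u₁ x) (hu₂ : ∀ x ∈ s₂, 0 ≤ u₂ x) (hv : ∀ x ∈ t, 0 ≤ v x)
    {M : ℝ} (hM : 0 ≤ M)
    (hcard : ∀ r ∈ Icc 0 M,
      #{x ∈ s₁ | r < u₁ x} + #{x ∈ s₂ | r < u₂ x} ≤ #{x ∈ t | r < v x} + 1) :
    ∑ x ∈ s₁, min (u₁ x) M ^ d + ∑ x ∈ s₂, min (u₂ x) M ^ d ≤
      ∑ x ∈ t, min (v x) M ^ d + M ^ d := by
  have hφ : IntervalIntegrable (fun r : ℝ => (d : ℝ) * r ^ (d - 1)) volume 0 M :=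
    ((continuous_pow _).intervalIntegrable _ _).const_mul _
  have hI₁ := intervalIntegrable_card_lt_mul (d := d) s₁ u₁ M
  have hI₂ := intervalIntegrable_card_lt_mul (d := d) s₂ u₂ M
  have hJ := intervalIntegrable_card_lt_mul (d := d) t v M
  rw [← integral_card_lt_mul_eq_sum_min_pow hd s₁ hu₁ hM,
    ← integral_card_lt_mul_eq_sum_min_pow hd s₂ hu₂ hM,
    ← integral_card_lt_mul_eq_sum_min_pow hd t hv hM, ← integral_natCast_mul_pow_sub_one hd M,
    ← intervalIntegral.integral_add hI₁ hI₂, ← intervalIntegral.integral_add hJ hφ]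
  refine intervalIntegral.integral_mono_on hM (hI₁.add hI₂) (hJ.add hφ) fun r hr => ?_
  have hweight : 0 ≤ (d : ℝ) * r ^ (d - 1) := by have := hr.1; positivity
  have hcard_r : (#{x ∈ s₁ | r < u₁ x} : ℝ) + #{x ∈ s₂ | r < u₂ x} ≤ #{x ∈ t | r < v x} + 1 := by
    exact_mod_cast hcard r hr
  nlinarith

end LayerCake

lemma add_pow_le_pow_add_pow_sub_pow {a b M X Y : ℝ} (ha : 0 ≤ a) (hb : 0 ≤ b) (hab : a + b = 1)
    (hM : 0 ≤ M) (hX : M ≤ X) (hY : M ≤ Y) (d : ℕ) :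
    (a * X + b * Y) ^ d ≤ X ^ d + Y ^ d - M ^ d := by
  have hconv : (a * X + b * Y) ^ d ≤ a * X ^ d + b * Y ^ d :=
    (convexOn_pow d).2 (hM.trans hX) (hM.trans hY) ha hb hab
  have hMX : b * M ^ d ≤ b * X ^ d := mul_le_mul_of_nonneg_left (pow_le_pow_left₀ hM hX d) hb
  have hMY : a * M ^ d ≤ a * Y ^ d := mul_le_mul_of_nonneg_left (pow_le_pow_left₀ hM hY d) ha
  linear_combination hconv + hMX + hMY + (X ^ d + Y ^ d - M ^ d) * hab

lemma le_root_sum_pow {ι : Type*} {d : ℕ} (hd : d ≠ 0) {s : Finset ι} {u : ι → ℝ}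
    (hu : ∀ x ∈ s, 0 ≤ u x) {x : ι} (hx : x ∈ s) : u x ≤ (∑ y ∈ s, u y ^ d) ^ ((1 : ℝ) / d) := by
  rw [one_div, Real.le_rpow_inv_iff_of_pos (hu x hx)
    (sum_nonneg fun y hy => pow_nonneg (hu y hy) d) (by positivity), Real.rpow_natCast]
  exact single_le_sum (fun y hy => pow_nonneg (hu y hy) d) hx

lemma sum_div_pow_eq_root_sum_pow_div_pow {ι : Type*} {d : ℕ} (hd : d ≠ 0) (s : Finset ι)
    {u : ι → ℝ} (hu : ∀ x ∈ s, 0 ≤ u x) (a : ℝ) :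
    ∑ x ∈ s, (u x / a) ^ d = ((∑ x ∈ s, u x ^ d) ^ ((1 : ℝ) / d) / a) ^ d := by
  rw [div_pow, one_div,
    Real.rpow_inv_natCast_pow (sum_nonneg fun x hx => pow_nonneg (hu x hx) d) hd, sum_div]
  simp_rw [div_pow]

section Superlevel

variable {α : Type*} [LinearOrder α] [Add α] [IsCancelAdd α] [AddLeftMono α] [AddRightMono α]

lemma card_add_card_le_card_add_one {A B C : Finset α} (hAB : A.Nonempty ↔ B.Nonempty)
    (hC : A + B ⊆ C) : #A + #B ≤ #C + 1 := by
  rcases A.eq_empty_or_nonempty with rfl | hA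
  · simp [not_nonempty_iff_eq_empty.1 (by simpa using hAB)]
  · have hB := hAB.1 hA
    have := cauchy_davenport_add_of_linearOrder_isCancelAdd hA hB
    have := Finset.card_le_card hC
    have := hA.card_pos
    omega

lemma card_lt_add_card_lt_le {s t c : Finset α} (hs : s.Nonempty) (ht : t.Nonempty)
    {u v w : α → ℝ} {a b : ℝ} (ha : 0 < a) (hb : 0 < b) (hab : a + b = 1)
    (hmax : s.sup' hs u = t.sup' ht v) (hw : ∀ x ∈ s, ∀ y ∈ t, a * u x + b * v y ≤ w (x + y))
    (hc : ∀ z ∉ c, w z ≤ 0) {r : ℝ} (hr : 0 ≤ r) :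
    #{x ∈ s | r < u x} + #{y ∈ t | r < v y} ≤ #{z ∈ c | r < w z} + 1 := by
  refine card_add_card_le_card_add_one ?_ ?_
  · rw [filter_nonempty_iff, filter_nonempty_iff, ← lt_sup'_iff hs, ← lt_sup'_iff ht, hmax]
  · intro z hz
    obtain ⟨x, hx, y, hy, rfl⟩ := Finset.mem_add.1 hz
    rw [mem_filter] at hx hy
    have hrw : r < w (x + y) := calc
      r = a * r + b * r := by rw [← add_mul, hab, one_mul]
      _ < a * u x + b * v y :=
        add_lt_add (mul_lt_mul_of_pos_left hx.2 ha) (mul_lt_mul_of_pos_left hy.2 hb)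
      _ ≤ w (x + y) := hw x hx.1 y hy.1
    exact mem_filter.2 ⟨by_contra fun hz => (hc _ hz).not_gt (hr.trans_lt hrw), hrw⟩

lemma sum_pow_add_sum_pow_le_sum_pow_add_pow {d : ℕ} (hd : d ≠ 0) {s t c : Finset α}
    (hs : s.Nonempty) (ht : t.Nonempty) {u v w : α → ℝ} (hu : ∀ x ∈ s, 0 ≤ u x)
    (hv : ∀ y ∈ t, 0 ≤ v y) (hw : ∀ z ∈ c, 0 ≤ w z) (hc : ∀ z ∉ c, w z ≤ 0)
    (hmax : s.sup' hs u = t.sup' ht v) {a b : ℝ} (ha : 0 < a) (hb : 0 < b) (hab : a + b = 1)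
    (huvw : ∀ x ∈ s, ∀ y ∈ t, a * u x + b * v y ≤ w (x + y)) :
    ∑ x ∈ s, u x ^ d + ∑ y ∈ t, v y ^ d ≤ ∑ z ∈ c, w z ^ d + s.sup' hs u ^ d := by
  set M := s.sup' hs u
  obtain ⟨x₀, hx₀, -⟩ := exists_mem_eq_sup' hs u
  have hM : 0 ≤ M := (hu x₀ hx₀).trans (le_sup' u hx₀)
  have hlayer := sum_min_pow_add_sum_min_pow_le hd hu hv hw hM fun r hr =>
    card_lt_add_card_lt_le hs ht ha hb hab hmax huvw hc hr.1
  have hmin_u : ∑ x ∈ s, min (u x) M ^ d = ∑ x ∈ s, u x ^ d :=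
    sum_congr rfl fun x hx => by rw [min_eq_left (le_sup' u hx)]
  have hmin_v : ∑ y ∈ t, min (v y) M ^ d = ∑ y ∈ t, v y ^ d :=
    sum_congr rfl fun y hy => by rw [min_eq_left (hmax ▸ le_sup' v hy)]
  rw [hmin_u, hmin_v] at hlayer
  refine hlayer.trans (add_le_add_left (sum_le_sum fun z hz => ?_) _)
  exact pow_le_pow_left₀ (le_min (hw z hz) hM) (min_le_left _ _) d

theorem root_sum_pow_add_root_sum_pow_pow_le {d : ℕ} (hd : d ≠ 0) {s t c : Finset α}
    (hs : s.Nonempty) (ht : t.Nonempty) {u v w : α → ℝ} (hu : ∀ x ∈ s, 0 < u x)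
    (hv : ∀ y ∈ t, 0 < v y) (hw : ∀ z ∈ c, 0 ≤ w z) (hc : ∀ z ∉ c, w z ≤ 0)
    (huvw : ∀ x ∈ s, ∀ y ∈ t, u x + v y ≤ w (x + y)) :
    ((∑ x ∈ s, u x ^ d) ^ ((1 : ℝ) / d) + (∑ y ∈ t, v y ^ d) ^ ((1 : ℝ) / d)) ^ d ≤
      ∑ z ∈ c, w z ^ d := by
  obtain ⟨x₀, hx₀, hx₀max⟩ := exists_mem_eq_sup' hs u
  obtain ⟨y₀, hy₀, hy₀max⟩ := exists_mem_eq_sup' ht v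
  set A := s.sup' hs u
  set B := t.sup' ht v
  have hA : 0 < A := hx₀max ▸ hu x₀ hx₀
  have hB : 0 < B := hy₀max ▸ hv y₀ hy₀
  set M := A + B
  have hM : 0 < M := by positivity
  set a := A / M
  set b := B / M
  have ha : 0 < a := by positivity
  have hb : 0 < b := by positivity
  have hab : a + b = 1 := by rw [← add_div, div_self hM.ne']
  have hsup_u : s.sup' hs (fun x => u x / a) = M := by
    rw [← sup'_div₀ ha.le]; exact div_div_cancel₀ hA.ne'
  have hsup_v : t.sup' ht (fun y => v y / b) = M := by
    rw [← sup'_div₀ hb.le]; exact div_div_cancel₀ hB.ne'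
  set P := (∑ x ∈ s, u x ^ d) ^ ((1 : ℝ) / d)
  set Q := (∑ y ∈ t, v y ^ d) ^ ((1 : ℝ) / d)
  have hMP : M ≤ P / a := by
    rw [le_div_iff₀ ha, mul_div_cancel₀ _ hM.ne', hx₀max]
    exact le_root_sum_pow hd (fun x hx => (hu x hx).le) hx₀
  have hMQ : M ≤ Q / b := by
    rw [le_div_iff₀ hb, mul_div_cancel₀ _ hM.ne', hy₀max]
    exact le_root_sum_pow hd (fun y hy => (hv y hy).le) hy₀
  have hscaled := sum_pow_add_sum_pow_le_sum_pow_add_pow hd hs ht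
    (fun x hx => (div_pos (hu x hx) ha).le) (fun y hy => (div_pos (hv y hy) hb).le) hw hc
    (hsup_u.trans hsup_v.symm) ha hb hab fun x hx y hy => by
      simpa only [mul_div_cancel₀ _ ha.ne', mul_div_cancel₀ _ hb.ne'] using huvw x hx y hy
  rw [hsup_u, sum_div_pow_eq_root_sum_pow_div_pow hd s (fun x hx => (hu x hx).le),
    sum_div_pow_eq_root_sum_pow_div_pow hd t (fun y hy => (hv y hy).le)] at hscaled
  calc (P + Q) ^ d = (a * (P / a) + b * (Q / b)) ^ d := by
        rw [mul_div_cancel₀ _ ha.ne', mul_div_cancel₀ _ hb.ne']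
    _ ≤ (P / a) ^ d + (Q / b) ^ d - M ^ d :=
        add_pow_le_pow_add_pow_sub_pow ha.le hb.le hab hM.le hMP hMQ d
    _ ≤ ∑ z ∈ c, w z ^ d := by linarith

end Superlevel

theorem discrete_prekopa (d : ℕ) (hd : 1 ≤ d) (f g h : ℤ → ℝ)
    (hf0 : ∀ x, 0 ≤ f x) (hg0 : ∀ x, 0 ≤ g x) (hh0 : ∀ x, 0 ≤ h x)
    (hfs : (Function.support f).Finite) (hgs : (Function.support g).Finite)
    (hhs : (Function.support h).Finite)
    (hfpos : 0 < ∑ᶠ x, f x) (hgpos : 0 < ∑ᶠ x, g x)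
    (hsup : ∀ x y : ℤ, 0 < f x → 0 < g y →
      h (x + y) ^ ((1 : ℝ) / d) ≥ f x ^ ((1 : ℝ) / d) + g y ^ ((1 : ℝ) / d)) :
    (∑ᶠ x, h x) ^ ((1 : ℝ) / d) ≥ (∑ᶠ x, f x) ^ ((1 : ℝ) / d) + (∑ᶠ x, g x) ^ ((1 : ℝ) / d) := by
  have hd₀ : d ≠ 0 := Nat.one_le_iff_ne_zero.1 hd
  have hpos_of_mem {φ : ℤ → ℝ} (hφ : ∀ x, 0 ≤ φ x) (hφs : φ.support.Finite) {x : ℤ}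
      (hx : x ∈ hφs.toFinset) : 0 < φ x :=
    (hφ x).lt_of_ne' (hφs.mem_toFinset.1 hx)
  have hroot_pow {φ : ℤ → ℝ} (hφ : ∀ x, 0 ≤ φ x) (x : ℤ) : (φ x ^ ((1 : ℝ) / d)) ^ d = φ x := by
    rw [one_div, Real.rpow_inv_natCast_pow (hφ x) hd₀]
  rw [finsum_eq_sum f hfs] at hfpos ⊢
  rw [finsum_eq_sum g hgs] at hgpos ⊢
  rw [finsum_eq_sum h hhs]
  have key := root_sum_pow_add_root_sum_pow_pow_le hd₀ (nonempty_of_sum_ne_zero hfpos.ne')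
    (nonempty_of_sum_ne_zero hgpos.ne') (u := fun x => f x ^ ((1 : ℝ) / d))
    (v := fun y => g y ^ ((1 : ℝ) / d)) (w := fun z => h z ^ ((1 : ℝ) / d))
    (fun x hx => Real.rpow_pos_of_pos (hpos_of_mem hf0 hfs hx) _)
    (fun y hy => Real.rpow_pos_of_pos (hpos_of_mem hg0 hgs hy) _)
    (fun z _ => Real.rpow_nonneg (hh0 z) _)
    (fun z hz => by rw [hhs.mem_toFinset, Function.mem_support, not_not] at hz; simp [hz, hd₀])
    fun x hx y hy => hsup x y (hpos_of_mem hf0 hfs hx) (hpos_of_mem hg0 hgs hy)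
  simp only [hroot_pow hf0, hroot_pow hg0, hroot_pow hh0] at key
  rw [ge_iff_le, one_div, Real.le_rpow_inv_iff_of_pos (by positivity)
    (sum_nonneg fun z _ => hh0 z) (by positivity), Real.rpow_natCast, ← one_div]
  exact key
end

section
/- Lev's iterated sumset bound (weak form): suppose A ⊆ {0,…,ℓ} with 0, ℓ ∈ A, |A| ≥ 3, and gcd(A) = 1. Then for every h ∈ ℕ, |h·A| ≥ h·ℓ − ℓ²/(|A|−2), where h·A is the h-fold iterated sumset. -/
/-!
Reduce modulo `ℓ` and let `Ā` be the image of `A` in `ZMod ℓ`, so `|Ā| ≥ |A| - 1`. In each residue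
class the least element of `(n + 1) • A` does not lie in `n • A + ℓ`, whence
`|(n + 1) • A| ≥ |n • A| + |(n + 1) • Ā|` and `|h • A| ≥ ∑_{j ≤ h} |j • Ā|`.

Since `Ā` contains `0` and generates `ZMod ℓ`, Hamidoune's isoperimetric method gives
`|B + Ā| ≥ |B| + |Ā| / 2` whenever `B + Ā` is not everything: the connectivity of `Ā` is at least
`|Ā| / 2` because an atom of minimal size through `0` is a subgroup. Hence
`2 |j • Ā| ≥ min (2ℓ) (j |Ā|)`, and summing over `j ≤ h` gives `|h • A| ≥ hℓ - ℓ² / |Ā|`.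
-/

open Pointwise Finset

namespace Hamidoune

variable {G : Type*} [AddCommGroup G] [Fintype G] [DecidableEq G] {S B C K K₁ K₂ : Finset G}

def fragments (S : Finset G) : Set (Finset G) := {B | B.Nonempty ∧ B + S ≠ univ}

-- The truncated subtraction is harmless: all lemmas assume `0 ∈ S`, so that `B ⊆ B + S`.
noncomputable def connectivity (S : Finset G) : ℕ :=
  sInf ((fun B => #(B + S) - #B) '' fragments S)

def atoms (S : Finset G) : Set (Finset G) :=
  {B | B ∈ fragments S ∧ #(B + S) = #B + connectivity S}

noncomputable def atomSize (S : Finset G) : ℕ := sInf (card '' atoms S)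

lemma card_add_connectivity_le (h0 : (0 : G) ∈ S) (hB : B ∈ fragments S) :
    #B + connectivity S ≤ #(B + S) := by
  have hκ : connectivity S ≤ #(B + S) - #B := Nat.sInf_le ⟨B, hB, rfl⟩
  have hBS : #B ≤ #(B + S) := card_le_card (subset_add_left B h0)
  omega

lemma atomSize_le (hB : B ∈ atoms S) : atomSize S ≤ #B := Nat.sInf_le ⟨B, hB, rfl⟩

lemma zero_mem_fragments (hS : S ≠ univ) : (0 : Finset G) ∈ fragments S :=
  ⟨zero_nonempty, by rwa [zero_add]⟩

lemma exists_mem_atoms_card_eq_atomSize (h0 : (0 : G) ∈ S) (hS : S ≠ univ) :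
    ∃ K ∈ atoms S, #K = atomSize S := by
  obtain ⟨B, hB, hBκ⟩ := Nat.sInf_mem (s := (fun B => #(B + S) - #B) '' fragments S)
    ⟨_, _, zero_mem_fragments hS, rfl⟩
  have hBS : #B ≤ #(B + S) := card_le_card (subset_add_left B h0)
  have hBa : B ∈ atoms S := ⟨hB, by unfold connectivity; simp only at hBκ; omega⟩
  exact Nat.sInf_mem (s := card '' atoms S) ⟨_, B, hBa, rfl⟩

lemma vadd_mem_atoms (g : G) (hK : K ∈ atoms S) : g +ᵥ K ∈ atoms S := by
  obtain ⟨⟨hne, hKS⟩, hcard⟩ := hK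
  refine ⟨⟨hne.vadd_finset, ?_⟩, ?_⟩
  · rwa [vadd_add_assoc, Ne, vadd_finset_eq_univ]
  · rw [vadd_add_assoc, card_vadd_finset, card_vadd_finset, hcard]

lemma compl_add_add_neg_subset_compl : (B + S)ᶜ + -S ⊆ Bᶜ := by
  intro x hx
  obtain ⟨w, hw, t, ht, rfl⟩ := mem_add.1 hx
  obtain ⟨s, hs, rfl⟩ := mem_neg.1 ht
  rw [mem_compl] at hw ⊢
  intro hB
  exact hw (by simpa using add_mem_add hB hs)

lemma compl_add_mem_fragments_neg (hB : B ∈ fragments S) : (B + S)ᶜ ∈ fragments (-S) := by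
  obtain ⟨⟨b, hb⟩, hBS⟩ := hB
  refine ⟨by rwa [nonempty_iff_ne_empty, Ne, compl_eq_empty_iff], fun h => ?_⟩
  have hb' : b ∈ Bᶜ := compl_add_add_neg_subset_compl (by rw [h]; exact mem_univ b)
  exact mem_compl.1 hb' hb

lemma card_compl_add_add_neg_le (h0 : (0 : G) ∈ S) :
    #((B + S)ᶜ + -S) ≤ #(B + S)ᶜ + (#(B + S) - #B) := by
  have h₁ : #((B + S)ᶜ + -S) ≤ #Bᶜ := card_le_card compl_add_add_neg_subset_compl
  have h₂ : #B ≤ #(B + S) := card_le_card (subset_add_left B h0)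
  have h₃ : #(B + S) ≤ Fintype.card G := card_le_univ _
  rw [card_compl] at h₁ ⊢
  omega

lemma connectivity_neg_le (h0 : (0 : G) ∈ S) (hS : S ≠ univ) :
    connectivity (-S) ≤ connectivity S := by
  obtain ⟨K, ⟨hKf, hKκ⟩, -⟩ := exists_mem_atoms_card_eq_atomSize h0 hS
  have h₁ : connectivity (-S) ≤ #((K + S)ᶜ + -S) - #(K + S)ᶜ :=
    Nat.sInf_le ⟨_, compl_add_mem_fragments_neg hKf, rfl⟩
  have h₂ := card_compl_add_add_neg_le (B := K) h0
  omega

lemma connectivity_neg (h0 : (0 : G) ∈ S) (hS : S ≠ univ) :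
    connectivity (-S) = connectivity S := by
  have h0' : (0 : G) ∈ -S := by simpa using h0
  have hS' : -S ≠ univ := fun h => hS (by rw [← neg_neg S, h, neg_univ])
  have := connectivity_neg_le h0' hS'
  rw [neg_neg] at this
  exact le_antisymm (connectivity_neg_le h0 hS) this

lemma compl_add_mem_atoms_neg (h0 : (0 : G) ∈ S) (hS : S ≠ univ) (hK : K ∈ atoms S) :
    (K + S)ᶜ ∈ atoms (-S) := by
  obtain ⟨hKf, hKκ⟩ := hK
  have hWf := compl_add_mem_fragments_neg hKf
  refine ⟨hWf, ?_⟩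
  have h₁ := card_add_connectivity_le (by simpa using h0) hWf
  have h₂ := card_compl_add_add_neg_le (B := K) h0
  rw [connectivity_neg h0 hS] at *
  omega

omit [Fintype G] in
lemma card_union_add_add_card_inter_add_le :
    #((B ∪ C) + S) + #((B ∩ C) + S) ≤ #(B + S) + #(C + S) := by
  rw [union_add, ← card_union_add_card_inter (B + S)]
  exact Nat.add_le_add_left (card_le_card inter_add_subset) _

lemma lt_card_add_of_card_lt_atomSize (h0 : (0 : G) ∈ S) (hB : B ∈ fragments S)
    (hlt : #B < atomSize S) : #B + connectivity S < #(B + S) := by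
  refine lt_of_le_of_ne (card_add_connectivity_le h0 hB) fun h => ?_
  exact absurd (atomSize_le ⟨hB, h.symm⟩) (not_le.2 hlt)

lemma eq_of_mem_atoms_of_inter_nonempty (h0 : (0 : G) ∈ S) (hS : S ≠ univ)
    (hsize : atomSize S ≤ atomSize (-S)) (h₁ : K₁ ∈ atoms S) (h₂ : K₂ ∈ atoms S)
    (hc₁ : #K₁ = atomSize S) (hc₂ : #K₂ = atomSize S) (hI : (K₁ ∩ K₂).Nonempty) :
    K₁ = K₂ := by
  by_contra hne
  have hIlt : #(K₁ ∩ K₂) < atomSize S := by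
    rw [← hc₁]
    refine card_lt_card (Finset.ssubset_iff_subset_ne.2 ⟨inter_subset_left, fun h => hne ?_⟩)
    exact eq_of_subset_of_card_le (h ▸ inter_subset_right) (by omega)
  have hIf : K₁ ∩ K₂ ∈ fragments S :=
    ⟨hI, fun h => h₁.1.2 (eq_univ_of_forall fun x => add_subset_add_right inter_subset_left
      (h ▸ mem_univ x))⟩
  have hI := lt_card_add_of_card_lt_atomSize h0 hIf hIlt
  have hsub := card_union_add_add_card_inter_add_le (B := K₁) (C := K₂) (S := S)
  have hcup := card_union_add_card_inter K₁ K₂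
  have hK₁ := h₁.2
  have hK₂ := h₂.2
  by_cases hU : (K₁ ∪ K₂) + S = univ
  · -- the complement of `K₁ + S` is an atom of `-S`, yet smaller than `K₂`
    have hW := atomSize_le (compl_add_mem_atoms_neg h0 hS h₁)
    rw [card_compl] at hW
    rw [hU, card_univ] at hsub
    omega
  · have hUf : K₁ ∪ K₂ ∈ fragments S := ⟨h₁.1.1.mono subset_union_left, hU⟩
    have hUκ := card_add_connectivity_le h0 hUf
    omega

lemma exists_mem_atoms_card_eq_atomSize_zero_mem (h0 : (0 : G) ∈ S) (hS : S ≠ univ) :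
    ∃ K ∈ atoms S, #K = atomSize S ∧ (0 : G) ∈ K := by
  obtain ⟨K, hK, hc⟩ := exists_mem_atoms_card_eq_atomSize h0 hS
  obtain ⟨k, hk⟩ := hK.1.1
  refine ⟨-k +ᵥ K, vadd_mem_atoms _ hK, by rw [card_vadd_finset, hc], ?_⟩
  simpa using vadd_mem_vadd_finset (a := -k) hk

lemma subset_stabilizer_of_mem_atoms (h0 : (0 : G) ∈ S) (hS : S ≠ univ)
    (hsize : atomSize S ≤ atomSize (-S)) (hK : K ∈ atoms S) (hc : #K = atomSize S)
    (hK0 : (0 : G) ∈ K) : (K : Set G) ⊆ AddAction.stabilizer G K := by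
  intro g hg
  rw [SetLike.mem_coe, AddAction.mem_stabilizer_iff]
  refine eq_of_mem_atoms_of_inter_nonempty h0 hS hsize (vadd_mem_atoms g hK) hK
    (by rw [card_vadd_finset, hc]) hc ⟨g, mem_inter.2 ⟨?_, hg⟩⟩
  simpa using vadd_mem_vadd_finset (a := g) hK0

/-- The minimal atom `K` through `0` is a subgroup; as `S` generates `G`, some `s ∈ S` lies outside
it, and then `K` and `s +ᵥ K` are disjoint subsets of `K + S`. -/
lemma card_le_two_mul_connectivity_of_atomSize_le (h0 : (0 : G) ∈ S) (hS : S ≠ univ)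
    (hgen : AddSubgroup.closure (S : Set G) = ⊤) (hsize : atomSize S ≤ atomSize (-S)) :
    #S ≤ 2 * connectivity S := by
  obtain ⟨K, hK, hc, hK0⟩ := exists_mem_atoms_card_eq_atomSize_zero_mem h0 hS
  set H := AddAction.stabilizer G K
  have hKH := subset_stabilizer_of_mem_atoms h0 hS hsize hK hc hK0
  have hSH : ¬ (S : Set G) ⊆ H := by
    intro hSH
    have hH : H = ⊤ := top_unique (hgen ▸ (AddSubgroup.closure_le H).2 hSH)
    refine hK.1.2 (eq_univ_of_forall fun x => subset_add_left K h0 ?_)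
    have hx : x ∈ H := hH ▸ AddSubgroup.mem_top x
    rw [AddAction.mem_stabilizer_iff] at hx
    have := vadd_mem_vadd_finset (a := x) hK0
    rwa [hx, vadd_eq_add, add_zero] at this
  obtain ⟨s, hs, hsH⟩ := Set.not_subset.1 hSH
  have hdisj : Disjoint (s +ᵥ K) K := by
    refine disjoint_left.2 fun x hx hxK => hsH ?_
    obtain ⟨k, hk, rfl⟩ := mem_vadd_finset.1 hx
    simpa using H.sub_mem (hKH hxK) (hKH hk)
  have hsK : (s +ᵥ K) ∪ K ⊆ K + S :=
    union_subset (add_comm S K ▸ vadd_finset_subset_add hs) (subset_add_left K h0)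
  have h₁ := card_le_card hsK
  rw [card_union_of_disjoint hdisj, card_vadd_finset] at h₁
  have h₂ : #S ≤ #(K + S) := card_le_card (subset_add_right S hK0)
  have := hK.2
  omega

theorem card_le_two_mul_connectivity (h0 : (0 : G) ∈ S) (hS : S ≠ univ)
    (hgen : AddSubgroup.closure (S : Set G) = ⊤) : #S ≤ 2 * connectivity S := by
  rcases le_total (atomSize S) (atomSize (-S)) with hsize | hsize
  · exact card_le_two_mul_connectivity_of_atomSize_le h0 hS hgen hsize
  · have hS' : -S ≠ univ := fun h => hS (by rw [← neg_neg S, h, neg_univ])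
    have hgen' : AddSubgroup.closure ((-S : Finset G) : Set G) = ⊤ := by
      rwa [coe_neg, AddSubgroup.closure_neg]
    have := card_le_two_mul_connectivity_of_atomSize_le (by simpa using h0) hS' hgen'
      (by rwa [neg_neg])
    rwa [card_neg, connectivity_neg h0 hS] at this

theorem two_mul_card_add_card_le (h0 : (0 : G) ∈ S) (hgen : AddSubgroup.closure (S : Set G) = ⊤)
    (hB : B.Nonempty) (hBS : B + S ≠ univ) : 2 * #B + #S ≤ 2 * #(B + S) := by
  have hS : S ≠ univ := fun h => hBS (by
    obtain ⟨b, hb⟩ := hB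
    refine eq_univ_of_forall fun x => ?_
    have := add_mem_add hb (h ▸ mem_univ (x - b))
    rwa [add_sub_cancel] at this)
  have h₁ := card_add_connectivity_le h0 ⟨hB, hBS⟩
  have h₂ := card_le_two_mul_connectivity h0 hS hgen
  omega

theorem min_le_two_mul_card_nsmul (h0 : (0 : G) ∈ S)
    (hgen : AddSubgroup.closure (S : Set G) = ⊤) (n : ℕ) :
    min (2 * Fintype.card G) (n * #S) ≤ 2 * #(n • S) := by
  induction n with
  | zero => simp
  | succ n ih =>
    rw [succ_nsmul]
    by_cases hn : n • S + S = univ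
    · rw [hn, card_univ]
      exact min_le_left _ _
    · have hne : (n • S).Nonempty := ⟨0, by simpa using nsmul_mem_nsmul (n := n) h0⟩
      have := two_mul_card_add_card_le h0 hgen hne hn
      rw [add_mul, one_mul]
      omega

end Hamidoune

section Residues

variable {ℓ : ℕ} {A : Finset ℤ}

lemma card_add_card_image_intCast_le (hℓ : 0 < ℓ) {X Y : Finset ℤ} (hXY : X ⊆ Y)
    (hshift : X + {(ℓ : ℤ)} ⊆ Y) : #X + #(Y.image (Int.cast : ℤ → ZMod ℓ)) ≤ #Y := by
  set M : Finset ℤ := Y.filter (fun y => y - (ℓ : ℤ) ∉ Y)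
  -- the least element of each residue class met by `Y` lies in `M`
  have hM : Y.image (Int.cast : ℤ → ZMod ℓ) ⊆ M.image Int.cast := by
    intro ρ hρ
    obtain ⟨z, hz, hzmin⟩ := exists_min_image (Y.filter fun y : ℤ => (y : ZMod ℓ) = ρ) id
      (by simpa [Finset.Nonempty, mem_image] using hρ)
    rw [mem_filter] at hz
    refine mem_image.2 ⟨z, mem_filter.2 ⟨hz.1, fun hzY => ?_⟩, hz.2⟩
    have := hzmin (z - (ℓ : ℤ)) (mem_filter.2 ⟨hzY, by simp [hz.2]⟩)
    simp only [id] at this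
    omega
  have hdisj : Disjoint (X + {(ℓ : ℤ)}) M := by
    refine disjoint_left.2 fun y hy hyM => (mem_filter.1 hyM).2 ?_
    obtain ⟨x, hx, _, hℓ', rfl⟩ := mem_add.1 hy
    rw [mem_singleton.1 hℓ']
    simpa using hXY hx
  calc #X + #(Y.image (Int.cast : ℤ → ZMod ℓ))
      ≤ #(X + {(ℓ : ℤ)}) + #M := by
        rw [card_add_singleton]
        exact Nat.add_le_add_left ((card_le_card hM).trans card_image_le) _
    _ = #((X + {(ℓ : ℤ)}) ∪ M) := (card_union_of_disjoint hdisj).symm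
    _ ≤ #Y := card_le_card (union_subset hshift (filter_subset _ _))

lemma card_nsmul_add_card_nsmul_image_le (hℓ : 0 < ℓ) (h0 : (0 : ℤ) ∈ A) (hℓA : (ℓ : ℤ) ∈ A)
    (n : ℕ) : #(n • A) + #((n + 1) • A.image (Int.cast : ℤ → ZMod ℓ)) ≤ #((n + 1) • A) := by
  have himage := image_nsmul (Int.castAddHom (ZMod ℓ)) A (n + 1)
  rw [Int.coe_castAddHom] at himage
  rw [← himage, succ_nsmul]
  exact card_add_card_image_intCast_le hℓ (subset_add_left _ h0)
    (add_subset_add_left (singleton_subset_iff.2 hℓA))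

lemma sum_card_nsmul_image_le (hℓ : 0 < ℓ) (h0 : (0 : ℤ) ∈ A) (hℓA : (ℓ : ℤ) ∈ A) (n : ℕ) :
    ∑ j ∈ range (n + 1), #(j • A.image (Int.cast : ℤ → ZMod ℓ)) ≤ #(n • A) := by
  induction n with
  | zero => simp
  | succ n ih =>
    rw [sum_range_succ]
    have := card_nsmul_add_card_nsmul_image_le hℓ h0 hℓA n
    omega

lemma card_sub_one_le_card_image_intCast (hsub : A ⊆ Icc 0 (ℓ : ℤ)) (hℓA : (ℓ : ℤ) ∈ A) :
    #A - 1 ≤ #(A.image (Int.cast : ℤ → ZMod ℓ)) := by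
  have hinj : Set.InjOn (Int.cast : ℤ → ZMod ℓ) (A.erase (ℓ : ℤ)) := by
    intro x hx y hy hxy
    have hx' := mem_Icc.1 (hsub (mem_of_mem_erase hx))
    have hy' := mem_Icc.1 (hsub (mem_of_mem_erase hy))
    have hxℓ := ne_of_mem_erase hx
    have hyℓ := ne_of_mem_erase hy
    rw [ZMod.intCast_eq_intCast_iff', Int.emod_eq_of_lt hx'.1 (by omega),
      Int.emod_eq_of_lt hy'.1 (by omega)] at hxy
    exact hxy
  rw [← card_erase_of_mem hℓA, ← card_image_of_injOn hinj]
  exact card_le_card (image_subset_image (erase_subset _ _))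

lemma closure_image_intCast_eq_top (hgcd : A.gcd id = 1) :
    AddSubgroup.closure (A.image (Int.cast : ℤ → ZMod ℓ) : Set (ZMod ℓ)) = ⊤ := by
  set H := AddSubgroup.closure (A.image (Int.cast : ℤ → ZMod ℓ) : Set (ZMod ℓ))
  obtain ⟨g, hg⟩ := A.gcd_eq_sum_mul id
  have h1 : (1 : ZMod ℓ) ∈ H := by
    have : ((1 : ℤ) : ZMod ℓ) = ∑ a ∈ A, g a • (a : ZMod ℓ) := by
      rw [← hgcd, hg]
      push_cast
      simp [mul_comm]
    rw [Int.cast_one] at this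
    rw [this]
    exact sum_mem fun a ha =>
      zsmul_mem (AddSubgroup.subset_closure (by simpa using ⟨a, ha, rfl⟩)) _
  refine eq_top_iff.2 fun x _ => ?_
  obtain ⟨k, rfl⟩ := ZMod.intCast_surjective x
  simpa using zsmul_mem h1 k

lemma sum_min_le_two_mul_card_nsmul (hℓ : 0 < ℓ) (h0 : (0 : ℤ) ∈ A) (hℓA : (ℓ : ℤ) ∈ A)
    (hgcd : A.gcd id = 1) (n : ℕ) :
    ∑ j ∈ range (n + 1), min (2 * ℓ) (j * #(A.image (Int.cast : ℤ → ZMod ℓ))) ≤ 2 * #(n • A) := by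
  have : NeZero ℓ := ⟨hℓ.ne'⟩
  have h0' : (0 : ZMod ℓ) ∈ A.image (Int.cast : ℤ → ZMod ℓ) := by
    simpa using mem_image_of_mem (Int.cast : ℤ → ZMod ℓ) h0
  have hgrowth := Hamidoune.min_le_two_mul_card_nsmul h0' (closure_image_intCast_eq_top hgcd)
  rw [ZMod.card] at hgrowth
  calc ∑ j ∈ range (n + 1), min (2 * ℓ) (j * #(A.image (Int.cast : ℤ → ZMod ℓ)))
      ≤ ∑ j ∈ range (n + 1), 2 * #(j • A.image (Int.cast : ℤ → ZMod ℓ)) :=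
        sum_le_sum fun j _ => hgrowth j
    _ = 2 * ∑ j ∈ range (n + 1), #(j • A.image (Int.cast : ℤ → ZMod ℓ)) := (mul_sum ..).symm
    _ ≤ 2 * #(n • A) := Nat.mul_le_mul_left 2 (sum_card_nsmul_image_le hℓ h0 hℓA n)

end Residues

lemma two_mul_mul_mul_le_sum_min (L d n : ℕ) :
    2 * d * n * L ≤ 2 * d * ∑ j ∈ range (n + 1), min L (j * d) + L ^ 2 := by
  suffices h : 2 * d * n * L + (L - n * d) ^ 2 ≤
      2 * d * ∑ j ∈ range (n + 1), min L (j * d) + L ^ 2 by omega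
  induction n with
  | zero => simp
  | succ n ih =>
    rw [sum_range_succ, mul_add]
    have hnd : (n + 1) * d = n * d + d := by ring
    rcases le_or_gt ((n + 1) * d) L with hle | hlt
    · obtain ⟨b, rfl⟩ := Nat.exists_eq_add_of_le hle
      rw [min_eq_right hle, Nat.add_sub_cancel_left,
        show (n + 1) * d + b - n * d = b + d by omega] at *
      nlinarith
    · rw [min_eq_left hlt.le, Nat.sub_eq_zero_of_le hlt.le]
      nlinarith

theorem lev_iterated_sumset (ℓ : ℕ) (hℓ : 0 < ℓ) (A : Finset ℤ)
    (hsub : A ⊆ Finset.Icc 0 (ℓ : ℤ)) (h0 : (0 : ℤ) ∈ A) (hℓA : (ℓ : ℤ) ∈ A)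
    (hcard : 3 ≤ A.card) (hgcd : A.gcd id = 1) :
    ∀ h : ℕ, 0 < h → (((h • A).card : ℝ)) ≥ h * ℓ - (ℓ : ℝ) ^ 2 / (A.card - 2) := by
  intro h _
  set d := #(A.image (Int.cast : ℤ → ZMod ℓ))
  have hd : #A - 1 ≤ d := card_sub_one_le_card_image_intCast hsub hℓA
  have hsum := sum_min_le_two_mul_card_nsmul hℓ h0 hℓA hgcd h
  have harith := two_mul_mul_mul_le_sum_min (2 * ℓ) d h
  have hkey : (d : ℝ) * (h * ℓ) ≤ d * #(h • A) + ℓ ^ 2 := by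
    have := Nat.mul_le_mul_left (2 * d) hsum
    exact_mod_cast (by nlinarith : d * (h * ℓ) ≤ d * #(h • A) + ℓ ^ 2)
  have hA2 : (0 : ℝ) < #A - 2 := by
    have : (3 : ℝ) ≤ #A := by exact_mod_cast hcard
    linarith
  have hAd : (#A : ℝ) - 2 ≤ d := by
    have : (#A : ℝ) ≤ d + 1 := by exact_mod_cast (by omega : #A ≤ d + 1)
    linarith
  have hdiv : (h : ℝ) * ℓ - #(h • A) ≤ ℓ ^ 2 / d := by
    rw [le_div_iff₀ (hA2.trans_le hAd)]
    linarith
  have hle : (ℓ : ℝ) ^ 2 / d ≤ ℓ ^ 2 / (#A - 2) := div_le_div_of_nonneg_left (by positivity) hA2 hAd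
  rw [ge_iff_le]
  linarith
end

section
/- If A ⊆ [−ℓ,ℓ] ∩ ℤ is symmetric with 0, ℓ ∈ A and gcd(A\{0}) = 1, and m is a positive integer with m ≤ ℓ/2 and |A| > (2ℓ+1)/(m+1), then every integer z with |z| ≤ 2mℓ lies in the 20m-fold iterated sumset 20m·A. -/
/-!
Reduce modulo `ℓ`. The image `S` of `A` in `ZMod ℓ` is symmetric, contains `0`, generates
`ZMod ℓ` (as `gcd = 1`) and has `|A| ≤ 2|S| + 1`, so `|S|` is about `ℓ / (m + 1)`.

Hamidoune's isoperimetric method gives `|X + S| ≥ |X| + |S| / 2` whenever `X ≠ ∅` and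
`X + S ≠ ZMod ℓ`: by submodularity of the boundary `|X + S| - |X|`, an atom (a fragment of least
boundary, and of least size among those) meets each of its translates trivially or equals it, so
the atom through `0` is a subgroup `H`; since `S ⊄ H`, `H + S` contains two cosets of `H`.
Iterating, `3m • S = ZMod ℓ`. So every `z` is congruent mod `ℓ` to some `w ∈ 3m • A`, where
`|w| ≤ 3mℓ`, and `z - w = eℓ` with `|e| ≤ 5m` is a sum of `5m` elements of `{-ℓ, 0, ℓ} ⊆ A`.
-/

open Pointwise Finset

namespace Isoperimetric

section Boundary

variable {G : Type*} [AddCommGroup G] [DecidableEq G] {S : Finset G}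

def boundary (S X : Finset G) : ℕ := #(X + S) - #X

lemma card_add_eq_card_add_boundary (hS₀ : (0 : G) ∈ S) (X : Finset G) :
    #(X + S) = #X + boundary S X := by
  have := card_le_card (subset_add_left X hS₀)
  unfold boundary
  omega

lemma boundary_vadd (a : G) (X : Finset G) : boundary S (a +ᵥ X) = boundary S X := by
  simp only [boundary, vadd_add_assoc, card_vadd_finset]

lemma boundary_inter_add_boundary_union_le (hS₀ : (0 : G) ∈ S) (X Y : Finset G) :
    boundary S (X ∩ Y) + boundary S (X ∪ Y) ≤ boundary S X + boundary S Y := by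
  have hadd : #(X ∩ Y + S) + #(X ∪ Y + S) ≤ #(X + S) + #(Y + S) := by
    rw [union_add, ← card_inter_add_card_union (X + S)]
    exact Nat.add_le_add_right (card_le_card inter_add_subset) _
  have := card_inter_add_card_union X Y
  simp only [card_add_eq_card_add_boundary hS₀] at hadd
  omega

end Boundary

section Atoms

variable {G : Type*} [AddCommGroup G] [DecidableEq G] [Fintype G] {S X K L : Finset G}

def IsFragment (S X : Finset G) : Prop := X.Nonempty ∧ X + S ≠ univ

lemma IsFragment.vadd (hX : IsFragment S X) (a : G) : IsFragment S (a +ᵥ X) :=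
  ⟨hX.1.vadd_finset, by rw [vadd_add_assoc, Ne, vadd_finset_eq_univ]; exact hX.2⟩

lemma IsFragment.inter (hX : IsFragment S X) {Y : Finset G} (hXY : (X ∩ Y).Nonempty) :
    IsFragment S (X ∩ Y) :=
  ⟨hXY, fun h => hX.2 <| univ_subset_iff.1 <| h ▸ add_subset_add_right inter_subset_left⟩

lemma compl_add_add_subset_compl (hS : -S = S) (X : Finset G) : (X + S)ᶜ + S ⊆ Xᶜ := by
  intro y hy
  obtain ⟨x, hx, s, hs, rfl⟩ := mem_add.1 hy
  rw [mem_compl] at hx ⊢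
  intro hxs
  exact hx (mem_add.2 ⟨x + s, hxs, -s, hS ▸ neg_mem_neg hs, add_neg_cancel_right x s⟩)

lemma IsFragment.compl_add (hS₀ : (0 : G) ∈ S) (hS : -S = S) (hX : IsFragment S X) :
    IsFragment S (X + S)ᶜ ∧ boundary S (X + S)ᶜ ≤ boundary S X := by
  have hsub := compl_add_add_subset_compl hS X
  refine ⟨⟨nonempty_iff_ne_empty.2 (by rw [Ne, compl_eq_empty_iff]; exact hX.2), fun h => ?_⟩, ?_⟩
  · obtain ⟨x, hx⟩ := hX.1
    exact mem_compl.1 (hsub (h ▸ mem_univ x)) hx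
  · have h₁ := card_le_card hsub
    have h₂ := card_add_eq_card_add_boundary hS₀ X
    have h₃ := card_add_eq_card_add_boundary hS₀ (X + S)ᶜ
    have h₄ := card_le_univ (X + S)
    rw [card_compl] at h₁ h₃
    omega

structure IsAtom (S K : Finset G) : Prop where
  isFragment : IsFragment S K
  boundary_le ⦃X : Finset G⦄ : IsFragment S X → boundary S K ≤ boundary S X
  card_le ⦃X : Finset G⦄ : IsFragment S X → boundary S X = boundary S K → #K ≤ #X

lemma IsFragment.exists_isAtom (hX : IsFragment S X) : ∃ K, IsAtom S K := by
  classical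
  obtain ⟨K, hK, hmin⟩ := exists_min_image ({Y | IsFragment S Y} : Finset (Finset G))
    (fun Y => toLex (boundary S Y, #Y)) ⟨X, by simpa using hX⟩
  simp only [mem_filter, mem_univ, true_and, Prod.Lex.toLex_le_toLex] at hK hmin
  refine ⟨K, hK, fun Y hY => ?_, fun Y hY hYK => ?_⟩ <;> have := hmin Y hY <;> omega

lemma IsAtom.vadd (hK : IsAtom S K) (a : G) : IsAtom S (a +ᵥ K) where
  isFragment := hK.isFragment.vadd a
  boundary_le _ hX := (boundary_vadd a K).trans_le (hK.boundary_le hX)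
  card_le _ hX h := (card_vadd_finset a K).trans_le (hK.card_le hX (h.trans (boundary_vadd a K)))

lemma IsAtom.two_mul_card_add_boundary_le (hS₀ : (0 : G) ∈ S) (hS : -S = S) (hK : IsAtom S K) :
    2 * #K + boundary S K ≤ Fintype.card G := by
  obtain ⟨hC, hCK⟩ := hK.isFragment.compl_add hS₀ hS
  have hcard := hK.card_le hC (le_antisymm hCK (hK.boundary_le hC))
  have := card_add_eq_card_add_boundary hS₀ K
  have := card_le_univ (K + S)
  rw [card_compl] at hcard
  omega

/-- If `K ∪ L` is a fragment, submodularity makes `K ∩ L` an atom; otherwise `K + S` and `L + S`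
cover `G`, which contradicts `IsAtom.two_mul_card_add_boundary_le`. -/
lemma IsAtom.eq_of_inter_nonempty (hS₀ : (0 : G) ∈ S) (hS : -S = S) (hK : IsAtom S K)
    (hL : IsAtom S L) (hKL : (K ∩ L).Nonempty) : K = L := by
  have hI := hK.isFragment.inter hKL
  have hsubmod := boundary_inter_add_boundary_union_le hS₀ K L
  have hKb := hK.boundary_le hL.isFragment
  have hLb := hL.boundary_le hK.isFragment
  have hIb := hK.boundary_le hI
  by_cases hU : K ∪ L + S = univ
  · have hcover : Fintype.card G + #(K ∩ L + S) ≤ #(K + S) + #(L + S) := by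
      rw [← card_univ, ← hU, union_add, ← card_inter_add_card_union (K + S), add_comm]
      exact Nat.add_le_add_right (card_le_card inter_add_subset) _
    have := hK.two_mul_card_add_boundary_le hS₀ hS
    have := hL.card_le hK.isFragment (by omega)
    have := hK.card_le hL.isFragment (by omega)
    have := card_add_eq_card_add_boundary hS₀ K
    have := card_add_eq_card_add_boundary hS₀ L
    have := card_add_eq_card_add_boundary hS₀ (K ∩ L)
    have := hKL.card_pos
    omega
  · have := hK.boundary_le ⟨hK.isFragment.1.mono subset_union_left, hU⟩
    have hKsubL : K ⊆ L := inter_eq_left.1 <|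
      eq_of_subset_of_card_le inter_subset_left (hK.card_le hI (by omega))
    exact eq_of_subset_of_card_le hKsubL (hL.card_le hK.isFragment (by omega))

lemma IsAtom.vadd_eq_self (hS₀ : (0 : G) ∈ S) (hS : -S = S) (hK : IsAtom S K) (h0K : (0 : G) ∈ K)
    {a : G} (ha : a ∈ K) : a +ᵥ K = K :=
  (hK.vadd a).eq_of_inter_nonempty hS₀ hS hK
    ⟨a, mem_inter.2 ⟨by simpa using vadd_mem_vadd_finset (a := a) h0K, ha⟩⟩

lemma IsAtom.exists_addSubgroup_coe_eq (hS₀ : (0 : G) ∈ S) (hS : -S = S) (hK : IsAtom S K)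
    (h0K : (0 : G) ∈ K) : ∃ H : AddSubgroup G, (H : Set G) = K := by
  have hstab {a : G} (ha : a ∈ K) : a +ᵥ K = K := hK.vadd_eq_self hS₀ hS h0K ha
  refine ⟨{ carrier := K
            add_mem' := fun {a b} ha hb => ?_
            zero_mem' := h0K
            neg_mem' := fun {a} ha => ?_ }, rfl⟩
  · rw [mem_coe, ← hstab ha]
    exact vadd_mem_vadd_finset hb
  · obtain ⟨b, hb, hab⟩ := mem_vadd_finset.1 ((hstab ha).symm ▸ h0K : (0 : G) ∈ a +ᵥ K)
    rwa [neg_eq_of_add_eq_zero_right hab]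

/-- `S` generates `G`, so it is not contained in `H`; then `H + S` contains two cosets of `H`. -/
lemma card_le_two_mul_boundary_of_coe_eq_addSubgroup (hS₀ : (0 : G) ∈ S)
    (hgen : AddSubgroup.closure (S : Set G) = ⊤) {H : AddSubgroup G} (hK : (H : Set G) = K)
    (hKS : K + S ≠ univ) : #S ≤ 2 * boundary S K := by
  have memK (x : G) : x ∈ K ↔ x ∈ H := by rw [← mem_coe, ← hK, SetLike.mem_coe]
  obtain ⟨s, hs, hsK⟩ : ∃ s ∈ S, s ∉ K := by
    by_contra! hSK
    have hH : H = ⊤ := top_unique <| hgen ▸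
      (AddSubgroup.closure_le H).2 fun x hx => (memK x).1 (hSK x hx)
    exact hKS <| eq_univ_of_forall fun x =>
      subset_add_left K hS₀ ((memK x).2 (hH ▸ AddSubgroup.mem_top x))
  have hdisj : Disjoint K (s +ᵥ K) := disjoint_left.2 fun x hxK hx => by
    obtain ⟨k, hk, rfl⟩ := mem_vadd_finset.1 hx
    exact hsK <| (memK s).2 <| by
      simpa using H.sub_mem ((memK _).1 hxK) ((memK k).1 hk)
  have hcosets : K ∪ (s +ᵥ K) ⊆ K + S := union_subset (subset_add_left K hS₀) fun x hx => by
    obtain ⟨k, hk, rfl⟩ := mem_vadd_finset.1 hx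
    rw [vadd_eq_add, add_comm s k]
    exact add_mem_add hk hs
  have h₁ := card_le_card hcosets
  have h₂ := card_le_card (subset_add_right S ((memK 0).2 H.zero_mem))
  have := card_add_eq_card_add_boundary hS₀ K
  rw [card_union_of_disjoint hdisj, card_vadd_finset] at h₁
  omega

theorem card_le_two_mul_boundary (hS₀ : (0 : G) ∈ S) (hS : -S = S)
    (hgen : AddSubgroup.closure (S : Set G) = ⊤) (hX : IsFragment S X) :
    #S ≤ 2 * boundary S X := by
  obtain ⟨K, hK⟩ := hX.exists_isAtom
  obtain ⟨a, ha⟩ := hK.isFragment.1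
  have h0 : (0 : G) ∈ -a +ᵥ K := by simpa using vadd_mem_vadd_finset (a := -a) ha
  obtain ⟨H, hH⟩ := (hK.vadd (-a)).exists_addSubgroup_coe_eq hS₀ hS h0
  calc #S ≤ 2 * boundary S (-a +ᵥ K) :=
        card_le_two_mul_boundary_of_coe_eq_addSubgroup hS₀ hgen hH (hK.vadd (-a)).isFragment.2
    _ ≤ 2 * boundary S X := Nat.mul_le_mul_left 2 ((hK.vadd (-a)).boundary_le hX)

lemma nsmul_eq_univ_or_le_two_mul_card (hS₀ : (0 : G) ∈ S) (hS : -S = S)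
    (hgen : AddSubgroup.closure (S : Set G) = ⊤) {n : ℕ} (hn : 1 ≤ n) :
    n • S = univ ∨ (n + 1) * #S ≤ 2 * #(n • S) := by
  induction n, hn using Nat.le_induction with
  | base => exact Or.inr (by rw [one_nsmul])
  | succ n _ ih =>
    rw [succ_nsmul]
    by_cases hU : n • S + S = univ
    · exact Or.inl hU
    right
    have hgrowth := card_le_two_mul_boundary hS₀ hS hgen ⟨⟨0, zero_mem_nsmul hS₀⟩, hU⟩
    have := card_add_eq_card_add_boundary hS₀ (n • S)
    rcases ih with huniv | ih
    · exact absurd (eq_univ_of_forall fun x => subset_add_left _ hS₀ (huniv ▸ mem_univ x)) hU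
    · linarith

theorem nsmul_eq_univ_of_two_mul_card_le (hS₀ : (0 : G) ∈ S) (hS : -S = S)
    (hgen : AddSubgroup.closure (S : Set G) = ⊤) {n : ℕ}
    (hn : 2 * Fintype.card G ≤ (n + 1) * #S) : n • S = univ := by
  have hS_le := card_le_univ S
  rcases Nat.eq_zero_or_pos n with rfl | hn₁
  · have := Fintype.card_pos_iff.2 ⟨(0 : G)⟩
    omega
  refine (nsmul_eq_univ_or_le_two_mul_card hS₀ hS hgen hn₁).elim id fun h => ?_
  rw [← card_eq_iff_eq_univ]
  have := card_le_univ (n • S)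
  linarith

end Atoms

end Isoperimetric

lemma Int.closure_eq_top_of_gcd_eq_one {s : Finset ℤ} (h : s.gcd id = 1) :
    AddSubgroup.closure (s : Set ℤ) = ⊤ := by
  obtain ⟨d, hd⟩ := Int.subgroup_cyclic (AddSubgroup.closure (s : Set ℤ))
  rw [← AddSubgroup.zmultiples_eq_closure] at hd
  have hd₁ : d ∣ 1 := h ▸ Finset.dvd_gcd fun b hb =>
    Int.mem_zmultiples_iff.1 (hd ▸ AddSubgroup.subset_closure hb)
  rw [hd, eq_top_iff]
  exact fun x _ => Int.mem_zmultiples_iff.2 (hd₁.trans (one_dvd x))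

lemma ZMod.closure_image_intCast_eq_top {n : ℕ} {s : Finset ℤ}
    (hs : AddSubgroup.closure (s : Set ℤ) = ⊤) :
    AddSubgroup.closure (s.image (Int.cast : ℤ → ZMod n) : Set (ZMod n)) = ⊤ := by
  have := AddMonoidHom.map_closure (Int.castAddHom (ZMod n)) s
  rw [hs, AddSubgroup.map_top_of_surjective _ ZMod.intCast_surjective] at this
  rw [coe_image]
  exact this.symm

lemma ZMod.injOn_intCast_Ico (n : ℕ) (c : ℤ) :
    Set.InjOn (Int.cast : ℤ → ZMod n) (Set.Ico c (c + n)) := by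
  intro a ha b hb hab
  rw [ZMod.intCast_eq_intCast_iff_dvd_sub] at hab
  have := Int.eq_zero_of_abs_lt_dvd hab (abs_sub_lt_iff.2 ⟨by grind, by grind⟩)
  omega

lemma card_le_two_mul_card_image_intCast_add_one {ℓ : ℕ} {A : Finset ℤ}
    (hA : A ⊆ Icc (-(ℓ : ℤ)) ℓ) : #A ≤ 2 * #(A.image (Int.cast : ℤ → ZMod ℓ)) + 1 := by
  have hpart (c : ℤ) : #{a ∈ A | c ≤ a ∧ a < c + ℓ} ≤ #(A.image (Int.cast : ℤ → ZMod ℓ)) := by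
    rw [← card_image_of_injOn (s := {a ∈ A | c ≤ a ∧ a < c + ℓ})
      ((ZMod.injOn_intCast_Ico ℓ c).mono fun a ha => (mem_filter.1 ha).2)]
    exact card_le_card (image_subset_image (filter_subset _ _))
  have hcover :
      A ⊆ {a ∈ A | -(ℓ : ℤ) ≤ a ∧ a < -ℓ + ℓ} ∪ {a ∈ A | 0 ≤ a ∧ a < 0 + ℓ} ∪ {(ℓ : ℤ)} := by
    intro a ha
    have := mem_Icc.1 (hA ha)
    simp only [mem_union, mem_filter, mem_singleton, ha, true_and]
    omega
  calc #A ≤ _ := card_le_card hcover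
    _ ≤ _ := card_union_le _ _
    _ ≤ _ := Nat.add_le_add_right (card_union_le _ _) _
    _ ≤ _ := by rw [card_singleton]; have := hpart (-ℓ); have := hpart 0; omega

lemma abs_le_of_mem_nsmul {α : Type*} [AddCommGroup α] [LinearOrder α] [IsOrderedAddMonoid α]
    [DecidableEq α] {A : Finset α} {c : α} (hA : ∀ a ∈ A, |a| ≤ c) :
    ∀ {n : ℕ}, ∀ x ∈ n • A, |x| ≤ n • c
  | 0, x, hx => by simp_all
  | n + 1, _, hy => by
    obtain ⟨x, hx, a, ha, rfl⟩ := mem_add.1 (succ_nsmul A n ▸ hy)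
    rw [succ_nsmul]
    exact (abs_add_le x a).trans (add_le_add (abs_le_of_mem_nsmul hA x hx) (hA a ha))

lemma zsmul_mem_nsmul {α : Type*} [AddGroup α] [DecidableEq α] {A : Finset α} {a : α} {e : ℤ}
    {n : ℕ} (h₀ : (0 : α) ∈ A) (hA : -A = A) (ha : a ∈ A) (he : e.natAbs ≤ n) :
    e • a ∈ n • A := by
  obtain ⟨k, rfl | rfl⟩ := Int.eq_nat_or_neg e
  · rw [Int.natAbs_natCast] at he
    rw [natCast_zsmul]
    exact nsmul_subset_nsmul_right h₀ he (nsmul_mem_nsmul ha)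
  · rw [Int.natAbs_neg, Int.natAbs_natCast] at he
    rw [neg_zsmul, natCast_zsmul, ← neg_nsmul]
    exact nsmul_subset_nsmul_right h₀ he (nsmul_mem_nsmul (hA ▸ neg_mem_neg ha))

lemma mem_nsmul_of_nsmul_image_intCast_eq_univ {ℓ k j : ℕ} [NeZero ℓ] {A : Finset ℤ}
    (hsub : A ⊆ Icc (-(ℓ : ℤ)) ℓ) (h0 : (0 : ℤ) ∈ A) (hℓA : (ℓ : ℤ) ∈ A) (hsym : -A = A)
    (hcover : k • A.image (Int.cast : ℤ → ZMod ℓ) = univ) {z : ℤ} (hz : |z| ≤ j * ℓ) :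
    z ∈ (k + (k + j)) • A := by
  obtain ⟨w, hw, hwz⟩ : ∃ w ∈ k • A, (w : ZMod ℓ) = z := by
    have := image_nsmul (Int.castAddHom (ZMod ℓ)) A k
    rw [Int.coe_castAddHom, hcover] at this
    exact mem_image.1 (this ▸ mem_univ (z : ZMod ℓ))
  obtain ⟨e, he⟩ := (ZMod.intCast_eq_intCast_iff_dvd_sub w z ℓ).1 hwz
  have hw_abs : |w| ≤ k * ℓ := by
    simpa using abs_le_of_mem_nsmul (fun a ha => abs_le.2 (mem_Icc.1 (hsub ha))) w hw
  have he_abs : e.natAbs ≤ k + j := by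
    have : (ℓ : ℤ) * |e| ≤ ℓ * (k + j) := calc
      (ℓ : ℤ) * |e| = |z - w| := by rw [he, abs_mul, Nat.abs_cast]
      _ ≤ |z| + |w| := abs_sub _ _
      _ ≤ ℓ * (k + j) := by linarith
    rw [← Int.ofNat_le, Int.natCast_natAbs]
    exact_mod_cast le_of_mul_le_mul_left this (by simpa using Nat.pos_of_neZero ℓ)
  rw [add_nsmul, show z = w + e • (ℓ : ℤ) by rw [smul_eq_mul]; linarith]
  exact add_mem_add hw (zsmul_mem_nsmul h0 hsym hℓA he_abs)

theorem interval_in_iterated_sumset (ℓ m : ℕ) (hm : 0 < m) (hmℓ : 2 * m ≤ ℓ)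
    (A : Finset ℤ) (hsub : A ⊆ Finset.Icc (-(ℓ : ℤ)) ℓ)
    (h0 : (0 : ℤ) ∈ A) (hℓA : (ℓ : ℤ) ∈ A) (hsym : A = -A)
    (hgcd : (A.erase 0).gcd id = 1)
    (hcard : ((A.card : ℝ)) > (2 * ℓ + 1) / (m + 1)) :
    ∀ z : ℤ, |z| ≤ 2 * m * ℓ → z ∈ (20 * m) • A := by
  intro z hz
  have : NeZero ℓ := ⟨by omega⟩
  set S := A.image (Int.cast : ℤ → ZMod ℓ)
  have hS₀ : (0 : ZMod ℓ) ∈ S := Int.cast_zero (R := ZMod ℓ) ▸ mem_image_of_mem _ h0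
  have hS : -S = S := by
    simpa [← hsym] using (image_neg (Int.castAddHom (ZMod ℓ)) A).symm
  have hgen := ZMod.closure_image_intCast_eq_top (n := ℓ) <| top_unique <|
    (Int.closure_eq_top_of_gcd_eq_one hgcd).ge.trans <|
      AddSubgroup.closure_mono <| coe_subset.2 <| erase_subset 0 A
  have hA : 2 * ℓ + 1 < #A * (m + 1) := by
    exact_mod_cast (div_lt_iff₀ (by positivity)).1 hcard
  have hcover : (3 * m) • S = univ := by
    refine Isoperimetric.nsmul_eq_univ_of_two_mul_card_le hS₀ hS hgen ?_
    have := card_le_two_mul_card_image_intCast_add_one hsub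
    have : 1 ≤ #S := card_pos.2 ⟨0, hS₀⟩
    rw [ZMod.card]
    nlinarith
  have hz' : |z| ≤ ((2 * m : ℕ) : ℤ) * ℓ := by push_cast; exact hz
  exact nsmul_subset_nsmul_right h0 (by omega)
    (mem_nsmul_of_nsmul_image_intCast_eq_univ hsub h0 hℓA hsym.symm hcover hz')
end

section
/- Compression loss bound: let P = ∏_{i=1}^d [0, n_i] ∩ ℤ^d with each n_i ≥ n ≥ 1, and let Y ⊆ P be a down-set (i.e., compressed in every coordinate direction: if y ∈ Y and y' ≤ y coordinatewise with y' ∈ P then y' ∈ Y). Let Y' = {y ∈ Y : y + {0,1}^d ⊆ Y}. Then |Y'| ≥ |Y| − d·n^{−1}·|P|. -/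
/-!
Project every point `y ∈ Y \ Y'` along the diagonal direction `(1, …, 1)` onto the floor of
the box, `y ↦ y - (min_i y_i) • 1`. The projection is injective on `Y \ Y'`: two points with
the same image differ by a positive multiple `t • 1` of the diagonal, and then the lower one
`y` satisfies `y + 1 ≤ y + t • 1 ∈ Y`, which for a down-set puts the whole cube `y + {0,1}^d`
into `Y`. The floor is the union of the `d` facets `{x_i = 0}`, and the facet `{x_i = 0}` has
`|P| / (n_i + 1) ≤ |P| / n` points.
-/

open Finset Fintype

section Facets

variable {ι : Type*} [Fintype ι] [DecidableEq ι] {α : ι → Type*} [∀ i, DecidableEq (α i)]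

lemma card_filter_piFinset_eq_mul_card (s : ∀ i, Finset (α i)) (i : ι) {a : α i}
    (ha : a ∈ s i) :
    #{f ∈ piFinset s | f i = a} * #(s i) = #(piFinset s) := by
  rw [card_filter_piFinset_eq_of_mem s i ha, card_piFinset, mul_comm,
    mul_prod_erase _ (fun j => #(s j)) (mem_univ i)]

lemma card_filter_piFinset_exists_eq_mul_le (s : ∀ i, Finset (α i)) (a : ∀ i, α i)
    (ha : ∀ i, a i ∈ s i) {n : ℕ} (hn : ∀ i, n ≤ #(s i)) :
    #{f ∈ piFinset s | ∃ i, f i = a i} * n ≤ card ι * #(piFinset s) := by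
  have hunion : {f ∈ piFinset s | ∃ i, f i = a i} =
      univ.biUnion fun i => {f ∈ piFinset s | f i = a i} := by
    ext f
    simp
  calc #{f ∈ piFinset s | ∃ i, f i = a i} * n
      ≤ (∑ i, #{f ∈ piFinset s | f i = a i}) * n := by
        rw [hunion]
        exact Nat.mul_le_mul_right n card_biUnion_le
    _ = ∑ i, #{f ∈ piFinset s | f i = a i} * n := sum_mul ..
    _ ≤ ∑ i, #{f ∈ piFinset s | f i = a i} * #(s i) := by gcongr with i; exact hn i
    _ = card ι * #(piFinset s) := by
        simp only [card_filter_piFinset_eq_mul_card s _ (ha _), sum_const, card_univ, smul_eq_mul]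

end Facets

section CubeCore

variable {ι : Type*} [Fintype ι] [DecidableEq ι]

def cubeCore (Y : Finset (ι → ℤ)) : Finset (ι → ℤ) :=
  Y.filter fun y => ∀ c ∈ piFinset (fun _ : ι => ({0, 1} : Finset ℤ)), y + c ∈ Y

lemma nonneg_and_le_one_of_mem_piFinset {c : ι → ℤ}
    (hc : c ∈ piFinset (fun _ : ι => ({0, 1} : Finset ℤ))) : 0 ≤ c ∧ c ≤ 1 := by
  simp only [mem_piFinset, mem_insert, mem_singleton] at hc
  constructor <;> intro i <;> rcases hc i with h | h <;> simp [h]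

variable {N : ι → ℤ} {Y : Finset (ι → ℤ)}

lemma mem_cubeCore_of_add_one_le (hYP : Y ⊆ Icc 0 N)
    (hdown : ∀ y ∈ Y, ∀ y' ∈ Icc 0 N, y' ≤ y → y' ∈ Y)
    {y z : ι → ℤ} (hy : 0 ≤ y) (hz : z ∈ Y) (hyz : y + 1 ≤ z) : y ∈ cubeCore Y := by
  have hzN : z ≤ N := (mem_Icc.mp (hYP hz)).2
  have hcube : ∀ c : ι → ℤ, 0 ≤ c → c ≤ 1 → y + c ∈ Y := fun c hc0 hc1 =>
    have hle : y + c ≤ z := (add_le_add le_rfl hc1).trans hyz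
    hdown z hz _ (mem_Icc.mpr ⟨add_nonneg hy hc0, hle.trans hzN⟩) hle
  refine mem_filter.mpr ⟨by simpa using hcube 0 le_rfl zero_le_one, fun c hc => ?_⟩
  exact hcube c (nonneg_and_le_one_of_mem_piFinset hc).1 (nonneg_and_le_one_of_mem_piFinset hc).2

end CubeCore

section DiagonalProjection

variable {ι : Type*} [Fintype ι] [Nonempty ι]

def minCoord (y : ι → ℤ) : ℤ := univ.inf' univ_nonempty y

def diagProj (y : ι → ℤ) : ι → ℤ := y - fun _ => minCoord y

lemma minCoord_le (y : ι → ℤ) (i : ι) : minCoord y ≤ y i := inf'_le _ (mem_univ i)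

lemma exists_eq_minCoord (y : ι → ℤ) : ∃ i, y i = minCoord y := by
  obtain ⟨i, -, hi⟩ := exists_mem_eq_inf' univ_nonempty y
  exact ⟨i, hi.symm⟩

variable [DecidableEq ι] {N : ι → ℤ} {Y : Finset (ι → ℤ)}

lemma diagProj_mem_floor {y : ι → ℤ} (hy : y ∈ Icc 0 N) :
    diagProj y ∈ {x ∈ Icc 0 N | ∃ i, x i = 0} := by
  obtain ⟨hy0, hyN⟩ := mem_Icc.mp hy
  obtain ⟨j, hj⟩ := exists_eq_minCoord y
  have hmin : 0 ≤ minCoord y := hj ▸ hy0 j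
  refine mem_filter.mpr ⟨mem_Icc.mpr ⟨fun i => ?_, fun i => ?_⟩, j, ?_⟩
  · simpa [diagProj] using minCoord_le y i
  · simpa [diagProj] using (sub_le_self _ hmin).trans (hyN i)
  · simp [diagProj, hj]

lemma injOn_diagProj (hYP : Y ⊆ Icc 0 N)
    (hdown : ∀ y ∈ Y, ∀ y' ∈ Icc 0 N, y' ≤ y → y' ∈ Y) :
    Set.InjOn diagProj (↑(Y \ cubeCore Y) : Set (ι → ℤ)) := by
  intro y hy z hz hyz
  simp only [coe_sdiff, Set.mem_sdiff, mem_coe] at hy hz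
  wlog hle : minCoord y ≤ minCoord z generalizing y z
  · exact (this hyz.symm hz hy (le_of_not_ge hle)).symm
  have hcoord : ∀ i, z i = y i + (minCoord z - minCoord y) := fun i => by
    have := congrFun hyz i
    simp only [diagProj, Pi.sub_apply] at this
    omega
  rcases hle.lt_or_eq with hlt | heq
  · refine absurd (mem_cubeCore_of_add_one_le hYP hdown (mem_Icc.mp (hYP hy.1)).1 hz.1 ?_) hy.2
    intro i
    simp only [Pi.add_apply, Pi.one_apply, hcoord i]
    omega
  · funext i
    simp [hcoord i, heq]

lemma card_sdiff_cubeCore_mul_le {N : ι → ℕ} (hYP : Y ⊆ Icc 0 fun i => (N i : ℤ))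
    (hdown : ∀ y ∈ Y, ∀ y' ∈ Icc 0 (fun i => (N i : ℤ)), y' ≤ y → y' ∈ Y)
    {n : ℕ} (hn : ∀ i, n ≤ N i + 1) :
    #(Y \ cubeCore Y) * n ≤ card ι * #(Icc 0 fun i => (N i : ℤ)) := by
  have hproj : #(Y \ cubeCore Y) ≤ #{x ∈ Icc 0 (fun i => (N i : ℤ)) | ∃ i, x i = 0} :=
    card_le_card_of_injOn diagProj (fun _ hy => diagProj_mem_floor (hYP (mem_sdiff.mp hy).1))
      (injOn_diagProj hYP hdown)
  refine (Nat.mul_le_mul_right n hproj).trans ?_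
  exact card_filter_piFinset_exists_eq_mul_le (fun i => Icc (0 : ℤ) (N i)) 0 (fun i => by simp)
    (fun i => by simpa using hn i)

end DiagonalProjection

theorem compression_loss_bound (d n : ℕ) (hd : 0 < d) (hn : 0 < n)
    (ns : Fin d → ℕ) (hns : ∀ i, n ≤ ns i)
    (P : Finset (Fin d → ℤ)) (hP : P = Fintype.piFinset (fun i => Finset.Icc 0 (ns i : ℤ)))
    (Y : Finset (Fin d → ℤ)) (hYP : Y ⊆ P)
    (hdown : ∀ y ∈ Y, ∀ y' ∈ P, (∀ i, y' i ≤ y i) → y' ∈ Y)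
    (Y' : Finset (Fin d → ℤ))
    (hY' : Y' = Y.filter (fun y =>
      ∀ c ∈ Fintype.piFinset (fun _ : Fin d => ({0, 1} : Finset ℤ)), y + c ∈ Y)) :
    ((Y'.card : ℝ)) ≥ Y.card - d * (n : ℝ)⁻¹ * P.card := by
  have : Nonempty (Fin d) := ⟨⟨0, hd⟩⟩
  obtain rfl : Y' = cubeCore Y := hY'
  obtain rfl : P = Icc 0 fun i => (ns i : ℤ) := hP
  have hloss :
      (#(Y \ cubeCore Y) : ℝ) ≤ d * (n : ℝ)⁻¹ * #(Icc 0 fun i => (ns i : ℤ)) := by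
    rw [mul_right_comm, ← div_eq_mul_inv, le_div_iff₀ (by positivity)]
    have := card_sdiff_cubeCore_mul_le hYP hdown fun i => (hns i).trans (Nat.le_succ _)
    rw [Fintype.card_fin] at this
    exact_mod_cast this
  have hsplit : (#Y : ℝ) = #(Y \ cubeCore Y) + #(cubeCore Y) := by
    exact_mod_cast (card_sdiff_add_card_eq_card (filter_subset _ Y)).symm
  linarith
end
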